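/- arXiv:math/0601040 — 5 statements merged into one kernel-verified Lean document; each statement's English description precedes it below -/
import Mathlib

section
/- For any polynomial P in ℂ⟨X_1,…,X_m⟩ and any indices k, l in {1,…,m}, one has ∂_k D_l P = (∂_l D_k P)^t, where t is the flip (A⊗B)^t = B⊗A on the tensor square. -/
/-!
A word has one splitting `w = r ++ k :: s` per occurrence of `k`. A term of `∂_k D_l w` comes from an
occurrence of `l` and one of `k` in `w`: from `w = r l a k b` it is `a ⊗ b r`, from `w = r k a l b` it
is `b r ⊗ a`, because `∂_k` obeys the Leibniz rule on the rotated word `s r` of `w = r l s`. The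
second kind of term is the flip of the first kind of term of `∂_l D_k w`, once one knows that the
triple splittings `r k a l b` can be enumerated by first locating `k` or by first locating `l`.
-/

/-- Words in `m` noncommuting letters: monomials of the free algebra `ℂ⟨X_1,…,X_m⟩`. -/
abbrev Word (m : ℕ) := List (Fin m)

/-- Noncommutative polynomials: finitely supported complex combinations of words. -/
abbrev NCPoly (m : ℕ) := Word m →₀ ℂ

/-- The tensor square, as combinations of pairs of words. -/
abbrev NCPoly₂ (m : ℕ) := (Word m × Word m) →₀ ℂ

/-- Noncommutative derivative of a monomial: `∂_k w = Σ_{w = r X_k s} r ⊗ s`. -/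
noncomputable def derW {m : ℕ} (k : Fin m) (w : Word m) : NCPoly₂ m :=
  ∑ i : Fin w.length,
    if w.get i = k then Finsupp.single (w.take i.1, w.drop (i.1 + 1)) 1 else 0

/-- Noncommutative derivative `∂_k`, extended linearly. -/
noncomputable def der {m : ℕ} (k : Fin m) : NCPoly m →ₗ[ℂ] NCPoly₂ m :=
  Finsupp.lsum ℂ fun w => LinearMap.toSpanSingleton ℂ _ (derW k w)

/-- Cyclic derivative of a monomial: `D_k w = Σ_{w = r X_k s} s r`. -/
noncomputable def cderW {m : ℕ} (k : Fin m) (w : Word m) : NCPoly m :=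
  ∑ i : Fin w.length,
    if w.get i = k then Finsupp.single (w.drop (i.1 + 1) ++ w.take i.1) 1 else 0

/-- Cyclic derivative `D_k`, extended linearly. -/
noncomputable def cder {m : ℕ} (k : Fin m) : NCPoly m →ₗ[ℂ] NCPoly m :=
  Finsupp.lsum ℂ fun w => LinearMap.toSpanSingleton ℂ _ (cderW k w)

/-- The flip `(A ⊗ B)ᵗ = B ⊗ A` on the tensor square, extended linearly. -/
noncomputable def flip2 {m : ℕ} (T : NCPoly₂ m) : NCPoly₂ m :=
  T.sum fun rs c => Finsupp.single (rs.2, rs.1) c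

section
variable {α : Type*} [DecidableEq α]

/-- The pairs `(r, s)` with `w = r ++ k :: s`, one for each occurrence of `k` in `w`. -/
def letterSplits (k : α) : List α → Multiset (List α × List α)
  | [] => 0
  | x :: w => (if x = k then {([], w)} else 0) + (letterSplits k w).map (Prod.map (x :: ·) id)

theorem sum_ite_get_eq_sum_letterSplits {β : Type*} [AddCommMonoid β] (k : α)
    (g : List α × List α → β) (w : List α) :
    ∑ i : Fin w.length, (if w.get i = k then g (w.take i, w.drop (i + 1)) else 0) =
      ((letterSplits k w).map g).sum := by
  induction w generalizing g with
  | nil => simp [letterSplits]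
  | cons x w ih =>
    refine (Fin.sum_univ_succ (n := w.length) _).trans ?_
    simp only [letterSplits, Multiset.map_add, Multiset.sum_add, Multiset.map_map]
    congr 1
    · split_ifs <;> simp_all
    · exact ih (g ∘ Prod.map (x :: ·) id)

theorem letterSplits_append (k : α) (u v : List α) :
    letterSplits k (u ++ v) =
      (letterSplits k u).map (Prod.map id (· ++ v)) +
        (letterSplits k v).map (Prod.map (u ++ ·) id) := by
  induction u with
  | nil => simp [letterSplits, Prod.map]
  | cons x u ih =>
    simp only [List.cons_append, letterSplits, ih, Multiset.map_add, Multiset.map_map, add_assoc]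
    congr 1
    · split_ifs <;> simp

/-- The triples `(r, a, b)` with `w = r ++ k :: a ++ l :: b`. -/
def letterSplits₂ (k l : α) (w : List α) : Multiset (List α × List α × List α) :=
  (letterSplits k w).bind fun p => (letterSplits l p.2).map fun q => (p.1, q)

theorem letterSplits₂_eq_bind_letterSplits_fst (k l : α) (w : List α) :
    letterSplits₂ k l w =
      (letterSplits l w).bind fun p => (letterSplits k p.1).map fun q => (q.1, q.2, p.2) := by
  induction w with
  | nil => simp [letterSplits, letterSplits₂]
  | cons x w ih =>
    have ih' := congr_arg (Multiset.map (Prod.map (x :: ·) id)) ih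
    simp only [letterSplits₂, Multiset.map_bind, Multiset.map_map] at ih'
    simp only [letterSplits₂, letterSplits, Multiset.add_bind, Multiset.bind_map, Prod.map_fst,
      Prod.map_snd, Multiset.map_add, Multiset.bind_add]
    split_ifs <;> simpa [letterSplits, Multiset.bind_add, Function.comp_def] using ih'

def cyclicSplits (k l : α) (w : List α) : Multiset (List α × List α) :=
  (letterSplits l w).bind fun p => letterSplits k (p.2 ++ p.1)

theorem cyclicSplits_eq (k l : α) (w : List α) :
    cyclicSplits k l w =
      (letterSplits₂ l k w).map (fun t => (t.2.1, t.2.2 ++ t.1)) +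
        (letterSplits₂ k l w).map (fun t => (t.2.2 ++ t.1, t.2.1)) := by
  rw [letterSplits₂_eq_bind_letterSplits_fst k l, cyclicSplits, letterSplits₂]
  simp only [letterSplits_append, Multiset.bind_add, Multiset.map_bind, Multiset.map_map]
  rfl

theorem cyclicSplits_comm (k l : α) (w : List α) :
    cyclicSplits k l w = (cyclicSplits l k w).map Prod.swap := by
  rw [cyclicSplits_eq, cyclicSplits_eq, Multiset.map_add, add_comm, Multiset.map_map,
    Multiset.map_map]
  rfl

end

section
variable {m : ℕ}

theorem derW_eq_sum_letterSplits (k : Fin m) (w : Word m) :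
    derW k w = ((letterSplits k w).map fun p => Finsupp.single p 1).sum :=
  sum_ite_get_eq_sum_letterSplits k (fun p => Finsupp.single p 1) w

theorem cderW_eq_sum_letterSplits (k : Fin m) (w : Word m) :
    cderW k w = ((letterSplits k w).map fun p => Finsupp.single (p.2 ++ p.1) 1).sum :=
  sum_ite_get_eq_sum_letterSplits k (fun p => Finsupp.single (p.2 ++ p.1) 1) w

theorem der_single_one (k : Fin m) (w : Word m) : der k (Finsupp.single w 1) = derW k w := by
  simp [der]

theorem cder_single_one (k : Fin m) (w : Word m) : cder k (Finsupp.single w 1) = cderW k w := by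
  simp [cder]

theorem der_cderW (k l : Fin m) (w : Word m) :
    der k (cderW l w) = ((cyclicSplits k l w).map fun p => Finsupp.single p 1).sum := by
  simp only [cderW_eq_sum_letterSplits, map_multiset_sum, Multiset.map_map, Function.comp_def,
    der_single_one, derW_eq_sum_letterSplits, cyclicSplits, Multiset.map_bind, Multiset.sum_bind]

theorem flip2_eq_lmapDomain (T : NCPoly₂ m) : flip2 T = Finsupp.lmapDomain ℂ ℂ Prod.swap T := rfl

end

/-- `∂_k D_l P = (∂_l D_k P)ᵗ` for all polynomials `P` and all `k, l`. -/
theorem der_cder_flip (m : ℕ) (P : NCPoly m) (k l : Fin m) :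
    der k (cder l P) = flip2 (der l (cder k P)) := by
  rw [flip2_eq_lmapDomain]
  suffices der k ∘ₗ cder l = Finsupp.lmapDomain ℂ ℂ Prod.swap ∘ₗ der l ∘ₗ cder k from
    LinearMap.congr_fun this P
  ext w : 2
  simp only [LinearMap.comp_apply, Finsupp.lsingle_apply, cder_single_one, der_cderW,
    cyclicSplits_comm k l, map_multiset_sum, Multiset.map_map, Function.comp_def]
  simp
end

section
/- Let V be a polynomial in ℂ⟨X_1,…,X_m⟩ and define Ξ̄₁(P) = Σ_{k=1}^m ∂_k P ♯ D_k V. Then for every P in ℂ₀⟨X_1,…,X_m⟩ and every l, D_l Ξ̄₁(ΣP) = Ξ̄₁(D_l ΣP) + Σ_{i=1}^m ∂_i D_l V ♯ D_i ΣP. (Here Ξ₁ in the paper is Ξ̄₁ ∘ Σ.) -/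
/-- The map `Σ` dividing each monomial by its degree (and killing constants). -/
noncomputable def sig {m : ℕ} : NCPoly m →ₗ[ℂ] NCPoly m :=
  Finsupp.lsum ℂ fun w => LinearMap.toSpanSingleton ℂ _
    (if w.length = 0 then 0 else ((w.length : ℂ)⁻¹) • Finsupp.single w 1)

/-- The operation `(A ⊗ B) ♯ C = A C B`, extended bilinearly. -/
noncomputable def sharp {m : ℕ} (T : NCPoly₂ m) (P : NCPoly m) : NCPoly m :=
  T.sum fun rs c => P.sum fun u d => Finsupp.single (rs.1 ++ u ++ rs.2) (c * d)

/-- The operator `Ξ̄₁(P) = Σ_{k=1}^m ∂_k P ♯ D_k V`. -/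
noncomputable def Xi1bar {m : ℕ} (V : NCPoly m) (P : NCPoly m) : NCPoly m :=
  ∑ k : Fin m, sharp (der k P) (cder k V)

open Finsupp

section SumCuts

variable {α M : Type*} [AddCommMonoid M]

/-- `sumCuts F w = ∑_{w = a ++ x :: b} F a x b`. -/
def sumCuts (F : List α → α → List α → M) (w : List α) : M :=
  ∑ i : Fin w.length, F (w.take i) (w.get i) (w.drop (i + 1))

@[simp]
lemma sumCuts_nil (F : List α → α → List α → M) : sumCuts F [] = 0 := rfl

@[simp]
lemma sumCuts_zero (w : List α) : sumCuts (fun _ _ _ => (0 : M)) w = 0 := by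
  simp [sumCuts]

lemma sumCuts_cons (F : List α → α → List α → M) (x : α) (u : List α) :
    sumCuts F (x :: u) = F [] x u + sumCuts (fun a y b => F (x :: a) y b) u :=
  Fin.sum_univ_succ _

lemma sumCuts_add (F G : List α → α → List α → M) (w : List α) :
    sumCuts (fun a x b => F a x b + G a x b) w = sumCuts F w + sumCuts G w :=
  Finset.sum_add_distrib

lemma map_sumCuts {N FH : Type*} [AddCommMonoid N] [FunLike FH M N] [AddMonoidHomClass FH M N]
    (φ : FH) (F : List α → α → List α → M) (w : List α) :
    φ (sumCuts F w) = sumCuts (fun a x b => φ (F a x b)) w :=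
  map_sum φ _ _

lemma ite_sumCuts (c : Prop) [Decidable c] (F : List α → α → List α → M) (w : List α) :
    (if c then sumCuts F w else 0) = sumCuts (fun a x b => if c then F a x b else 0) w := by
  split_ifs <;> simp [sumCuts]

lemma sum_sumCuts_ite [Fintype α] [DecidableEq α] (G : α → List α → List α → M)
    (w : List α) :
    ∑ k, sumCuts (fun a x b => if x = k then G k a b else 0) w = sumCuts (fun a x b => G x a b) w := by
  simp only [sumCuts]
  rw [Finset.sum_comm]
  simp

lemma sumCuts_append (F : List α → α → List α → M) (u v : List α) :
    sumCuts F (u ++ v) =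
      sumCuts (fun a x b => F a x (b ++ v)) u + sumCuts (fun a x b => F (u ++ a) x b) v := by
  induction u generalizing F with
  | nil => simp
  | cons x u ih =>
    rw [List.cons_append, sumCuts_cons, sumCuts_cons, ih, add_assoc]
    rfl

/-- Both sides enumerate the factorizations `w = a ++ x :: p ++ y :: q`. -/
lemma sumCuts_sumCuts_comm (G : List α → α → List α → α → List α → M) (w : List α) :
    sumCuts (fun a x b => sumCuts (fun p y q => G a x p y q) b) w =
      sumCuts (fun p y q => sumCuts (fun a x b => G a x b y q) p) w := by
  induction w generalizing G with
  | nil => rfl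
  | cons z u ih =>
    rw [sumCuts_cons, sumCuts_cons, sumCuts_nil, zero_add, ih]
    simp only [sumCuts_cons]
    rw [sumCuts_add]

end SumCuts

section NCPoly

variable {m : ℕ}

noncomputable def sharpL : NCPoly₂ m →ₗ[ℂ] NCPoly m →ₗ[ℂ] NCPoly m :=
  Finsupp.lsum ℂ fun rs => LinearMap.toSpanSingleton ℂ _ (lmapDomain ℂ ℂ fun u => rs.1 ++ u ++ rs.2)

lemma sharpL_apply (T : NCPoly₂ m) (P : NCPoly m) : sharpL T P = sharp T P := by
  simp only [sharpL, lsum_apply, sharp, Finsupp.sum, LinearMap.sum_apply,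
    LinearMap.toSpanSingleton_apply, LinearMap.smul_apply, lmapDomain_apply, mapDomain,
    Finset.smul_sum, smul_single, smul_eq_mul]

lemma sharp_single_single (r s u : Word m) (c d : ℂ) :
    sharp (single (r, s) c) (single u d) = single (r ++ u ++ s) (c * d) := by
  simp [sharp]

lemma der_single (k : Fin m) (w : Word m) (c : ℂ) :
    der k (single w c) = sumCuts (fun a x b => if x = k then single (a, b) c else 0) w := by
  simp [der, derW, sumCuts, Finset.smul_sum, smul_ite]

lemma cder_single (k : Fin m) (w : Word m) (c : ℂ) :
    cder k (single w c) = sumCuts (fun a x b => if x = k then single (b ++ a) c else 0) w := by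
  simp [cder, cderW, sumCuts, Finset.smul_sum, smul_ite]


lemma sum_map_der_single {N FH : Type*} [AddCommMonoid N] [FunLike FH (NCPoly₂ m) N]
    [AddMonoidHomClass FH (NCPoly₂ m) N] (φ : Fin m → FH)
    (w : Word m) (c : ℂ) :
    ∑ k, φ k (der k (single w c)) = sumCuts (fun a x b => φ x (single (a, b) c)) w := by
  simp only [der_single, map_sumCuts, apply_ite, map_zero]
  exact sum_sumCuts_ite (fun k a b => φ k (single (a, b) c)) w

lemma sum_map_cder_single {N FH : Type*} [AddCommMonoid N] [FunLike FH (NCPoly m) N]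
    [AddMonoidHomClass FH (NCPoly m) N] (φ : Fin m → FH)
    (w : Word m) (c : ℂ) :
    ∑ k, φ k (cder k (single w c)) = sumCuts (fun a x b => φ x (single (b ++ a) c)) w := by
  simp only [cder_single, map_sumCuts, apply_ite, map_zero]
  exact sum_sumCuts_ite (fun k a b => φ k (single (b ++ a) c)) w

lemma sharp_swap_single_right (T : NCPoly₂ m) (c : Word m) :
    sharp (mapDomain Prod.swap T) (single c 1) = mapDomain (fun q => q.2 ++ c ++ q.1) T := by
  rw [← sharpL_apply, ← LinearMap.flip_apply, ← lmapDomain_apply _ ℂ, ← LinearMap.comp_apply,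
    ← lmapDomain_apply _ ℂ]
  congr 1
  ext ⟨p, q⟩ : 2
  simp [sharpL_apply, sharp_single_single]

noncomputable def xiBar (f : Fin m → NCPoly m) : NCPoly m →ₗ[ℂ] NCPoly m :=
  ∑ k, sharpL.flip (f k) ∘ₗ der k

lemma Xi1bar_eq_xiBar (V P : NCPoly m) : Xi1bar V P = xiBar (fun k => cder k V) P := by
  simp [Xi1bar, xiBar, LinearMap.sum_apply, sharpL_apply]

lemma xiBar_single (f : Fin m → NCPoly m) (w : Word m) :
    xiBar f (single w 1) = sumCuts (fun a x b => sharp (single (a, b) 1) (f x)) w := by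
  simp only [xiBar, LinearMap.sum_apply, LinearMap.comp_apply]
  simpa only [LinearMap.flip_apply, sharpL_apply] using
    sum_map_der_single (fun k => sharpL.flip (f k)) w 1

lemma cder_sharp_single (l : Fin m) (a b : Word m) (P : NCPoly m) :
    cder l (sharp (single (a, b) 1) P) =
      sumCuts (fun p y q => if y = l then sharp (single (q, b ++ p) 1) P else 0) a
        + sharp (mapDomain Prod.swap (der l P)) (single (b ++ a) 1)
        + sumCuts (fun p y q => if y = l then sharp (single (q ++ a, p) 1) P else 0) b := by
  induction P using Finsupp.induction_linear with
  | zero => simp [sharp]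
  | add P Q hP hQ =>
    simp only [← sharpL_apply, map_add, mapDomain_add, LinearMap.add_apply] at *
    rw [hP, hQ]
    simp only [ite_add_zero, sumCuts_add]
    abel
  | single u c =>
    simp only [sharp_single_single, one_mul, cder_single, der_single, sharp_swap_single_right]
    rw [← lmapDomain_apply _ ℂ, map_sumCuts, sumCuts_append, sumCuts_append]
    simp only [apply_ite, map_zero, lmapDomain_apply, mapDomain_single, List.append_assoc]

lemma der_cder_single (k l : Fin m) (v : Word m) (c : ℂ) :
    der k (cder l (single v c)) =
      sumCuts (fun a x b => sumCuts (fun p y q =>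
        if x = l ∧ y = k then single (p, q ++ a) c else 0) b) v +
      sumCuts (fun a x b => sumCuts (fun p y q =>
        if x = l ∧ y = k then single (b ++ p, q) c else 0) a) v := by
  simp only [cder_single, map_sumCuts, apply_ite, map_zero, der_single, sumCuts_append,
    ite_add_zero, sumCuts_add, ite_sumCuts, ite_and]

lemma mapDomain_swap_der_cder (k l : Fin m) (V : NCPoly m) :
    mapDomain Prod.swap (der l (cder k V)) = der k (cder l V) := by
  induction V using Finsupp.induction_linear with
  | zero => simp
  | add V W hV hW => simp only [map_add, mapDomain_add, hV, hW]
  | single v c =>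
    rw [der_cder_single, der_cder_single, ← lmapDomain_apply _ ℂ]
    simp only [map_add, map_sumCuts, apply_ite, map_zero, lmapDomain_apply, mapDomain_single,
      Prod.swap_prod_mk]
    rw [add_comm]
    congr 1
    · rw [sumCuts_sumCuts_comm]
      simp only [and_comm]
    · rw [sumCuts_sumCuts_comm]
      simp only [and_comm]


theorem cder_xiBar (f : Fin m → NCPoly m) (l : Fin m) (Q : NCPoly m) :
    cder l (xiBar f Q) =
      xiBar f (cder l Q) + ∑ k, sharp (mapDomain Prod.swap (der l (f k))) (cder k Q) := by
  suffices h : cder l ∘ₗ xiBar f =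
      xiBar f ∘ₗ cder l + ∑ k, sharpL (mapDomain Prod.swap (der l (f k))) ∘ₗ cder k by
    simpa [sharpL_apply, LinearMap.sum_apply] using LinearMap.congr_fun h Q
  refine Finsupp.lhom_ext' fun w => LinearMap.ext_ring ?_
  simp only [LinearMap.comp_apply, lsingle_apply, LinearMap.add_apply, LinearMap.sum_apply]
  rw [sum_map_cder_single, xiBar_single, map_sumCuts]
  simp only [cder_sharp_single, sumCuts_add, cder_single, map_sumCuts, apply_ite, map_zero,
    xiBar_single, sumCuts_append, ite_add_zero, ite_sumCuts, sharpL_apply]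
  rw [sumCuts_sumCuts_comm (fun a x p y q => if x = l then sharp (single (p, q ++ a) 1) (f y) else 0),
    sumCuts_sumCuts_comm (fun a x p y q => if y = l then sharp (single (q ++ a, p) 1) (f x) else 0)]
  abel

end NCPoly

theorem cder_Xi1bar_general (m : ℕ) (V : NCPoly m) (P : NCPoly m) (l : Fin m) :
    cder l (Xi1bar V (sig P)) =
      Xi1bar V (cder l (sig P)) +
        ∑ i : Fin m, sharp (der i (cder l V)) (cder i (sig P)) := by
  simp only [Xi1bar_eq_xiBar, cder_xiBar, mapDomain_swap_der_cder]

/-- for any potential `V` and any `P ∈ ℂ₀⟨X_1,…,X_m⟩`,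
`D_l Ξ̄₁(Σ P) = Ξ̄₁(D_l Σ P) + Σ_{i=1}^m ∂_i D_l V ♯ D_i Σ P`. -/
theorem cder_Xi1bar (m : ℕ) (V : NCPoly m) (P : NCPoly m) (hP : P [] = 0) (l : Fin m) :
    cder l (Xi1bar V (sig P)) =
      Xi1bar V (cder l (sig P)) +
        ∑ i : Fin m, sharp (der i (cder l V)) (cder i (sig P)) :=
  cder_Xi1bar_general m V P l
end

section
/- Let μ be a probability measure on ℝ^n satisfying the log-Sobolev inequality ∫f² log(f²/μ(f²))dμ ≤ (2/ρ)∫‖∇f‖²dμ for all smooth f, with constant ρ > 0. Then for any smooth f with μ(f) = 0 and bounded gradient, μ(e^{λf}) ≤ exp(λ²‖‖∇f‖²‖_∞/(2ρ)) for all λ ∈ ℝ. -/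
open MeasureTheory

set_option maxHeartbeats 1000000

open Real MeasureTheory Filter Set

lemma abs_arctan_le (t : ℝ) : |arctan t| ≤ |t| := by
  have hl : LipschitzWith 1 arctan := by
    apply lipschitzWith_of_nnnorm_deriv_le differentiable_arctan
    intro x
    rw [Real.deriv_arctan]
    rw [← NNReal.coe_le_coe, coe_nnnorm, NNReal.coe_one, Real.norm_eq_abs, abs_of_pos
      (by positivity : (0:ℝ) < 1/(1+x^2)), div_le_one (by positivity)]
    nlinarith [sq_nonneg x]
  have := hl.dist_le_mul t 0
  simpa [Real.dist_eq, Real.arctan_zero] using this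

lemma norm_gradient_comp {n : ℕ} (ψ : ℝ → ℝ) {d : ℝ} {g : EuclideanSpace ℝ (Fin n) → ℝ}
    {x : EuclideanSpace ℝ (Fin n)} (hg : DifferentiableAt ℝ g x)
    (hψ : HasDerivAt ψ d (g x)) :
    ‖gradient (fun y => ψ (g y)) x‖ = |d| * ‖gradient g x‖ := by
  have h1 : HasFDerivAt (ψ ∘ g) (d • fderiv ℝ g x) x :=
    hψ.comp_hasFDerivAt x hg.hasFDerivAt
  have h2 : HasGradientAt (ψ ∘ g) (d • gradient g x) x := by
    rw [hasGradientAt_iff_hasFDerivAt]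
    have e : (InnerProductSpace.toDual ℝ _ (d • gradient g x)) = d • fderiv ℝ g x := by
      simp [gradient]
    rw [e]; exact h1
  have h3 : gradient (fun y => ψ (g y)) x = d • gradient g x := h2.gradient
  rw [h3, norm_smul, Real.norm_eq_abs]

section Herbst
variable {n : ℕ} {ρ : ℝ} {μ : Measure (EuclideanSpace ℝ (Fin n))}

lemma herbst_bounded_pos [IsProbabilityMeasure μ] (hρ : 0 < ρ)
    (hLSI : ∀ g : EuclideanSpace ℝ (Fin n) → ℝ, ContDiff ℝ (⊤ : ℕ∞) g →
      ∫ x, (g x) ^ 2 * Real.log ((g x) ^ 2 / ∫ y, (g y) ^ 2 ∂μ) ∂μ ≤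
        (2 / ρ) * ∫ x, ‖gradient g x‖ ^ 2 ∂μ)
    {K : ℝ} (hK0 : 0 ≤ K)
    (g : EuclideanSpace ℝ (Fin n) → ℝ) (hg : ContDiff ℝ (⊤ : ℕ∞) g) (B : ℝ)
    (hB : ∀ x, |g x| ≤ B) (hKg : ∀ x, ‖gradient g x‖ ^ 2 ≤ K)
    {lam : ℝ} (hlam : 0 < lam) :
    ∫ x, Real.exp (lam * g x) ∂μ ≤
      Real.exp (lam * (∫ x, g x ∂μ) + lam ^ 2 * K / (2 * ρ)) := by
  have hgc : Continuous g := hg.continuous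
  have hB0 : 0 ≤ B := le_trans (abs_nonneg _) (hB 0)
  set c : ℝ := K / (2 * ρ) with hc
  have hc0 : 0 ≤ c := by positivity
  -- integrability of all the bounded continuous integrands we shall meet
  have hint : ∀ h : EuclideanSpace ℝ (Fin n) → ℝ, Continuous h → (∃ C, ∀ x, |h x| ≤ C) →
      Integrable h μ := by
    rintro h hc ⟨C, hC⟩
    exact (integrable_const C).mono' hc.aestronglyMeasurable
      (Filter.Eventually.of_forall fun x => by simpa [Real.norm_eq_abs] using hC x)
  have hcexp : ∀ t : ℝ, Continuous fun x => Real.exp (t * g x) :=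
    fun t => Real.continuous_exp.comp (continuous_const.mul hgc)
  have hcexpg : ∀ t : ℝ, Continuous fun x => Real.exp (t * g x) * g x :=
    fun t => (hcexp t).mul hgc
  have hintexp : ∀ t : ℝ, Integrable (fun x => Real.exp (t * g x)) μ := by
    intro t
    refine hint _ (hcexp t) ⟨Real.exp (|t| * B), fun x => ?_⟩
    rw [abs_of_pos (Real.exp_pos _)]
    apply Real.exp_le_exp.2
    calc t * g x ≤ |t * g x| := le_abs_self _
      _ = |t| * |g x| := abs_mul _ _
      _ ≤ |t| * B := by nlinarith [abs_nonneg t, hB x]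
  have hintexpg : ∀ t : ℝ, Integrable (fun x => Real.exp (t * g x) * g x) μ := by
    intro t
    refine hint _ (hcexpg t) ⟨Real.exp (|t| * B) * B, fun x => ?_⟩
    rw [abs_mul, abs_of_pos (Real.exp_pos _)]
    have h1 : Real.exp (t * g x) ≤ Real.exp (|t| * B) := by
      apply Real.exp_le_exp.2
      calc t * g x ≤ |t * g x| := le_abs_self _
        _ = |t| * |g x| := abs_mul _ _
        _ ≤ |t| * B := by nlinarith [abs_nonneg t, hB x]
    nlinarith [hB x, Real.exp_pos (t * g x), abs_nonneg (g x)]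
  set H : ℝ → ℝ := fun t => ∫ x, Real.exp (t * g x) ∂μ with hH
  set Hd : ℝ → ℝ := fun t => ∫ x, Real.exp (t * g x) * g x ∂μ with hHd
  -- differentiation under the integral sign
  have hHder : ∀ t : ℝ, HasDerivAt H (Hd t) t := by
    intro t
    have := hasDerivAt_integral_of_dominated_loc_of_deriv_le (μ := μ)
      (F := fun s x => Real.exp (s * g x)) (F' := fun s x => Real.exp (s * g x) * g x)
      (x₀ := t) (bound := fun _ => Real.exp ((|t| + 1) * B) * B)
      (Metric.ball_mem_nhds t one_pos)
      (Filter.Eventually.of_forall fun s => (hcexp s).aestronglyMeasurable)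
      (hintexp t)
      ((hcexpg t).aestronglyMeasurable)
      ?_ (integrable_const _) ?_
    · exact this.2
    · refine Filter.Eventually.of_forall fun x => fun s hs => ?_
      have hs1 : |s| ≤ |t| + 1 := by
        have := abs_sub_abs_le_abs_sub s t
        have h2 : |s - t| ≤ 1 := by
          rw [Metric.mem_ball, Real.dist_eq] at hs
          linarith
        linarith
      rw [Real.norm_eq_abs, abs_mul, abs_of_pos (Real.exp_pos _)]
      have h1 : Real.exp (s * g x) ≤ Real.exp ((|t| + 1) * B) := by
        apply Real.exp_le_exp.2
        calc s * g x ≤ |s * g x| := le_abs_self _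
          _ = |s| * |g x| := abs_mul _ _
          _ ≤ (|t| + 1) * B := by nlinarith [abs_nonneg s, hB x, abs_nonneg (g x)]
      exact mul_le_mul h1 (hB x) (abs_nonneg _) (Real.exp_pos _).le
    · refine Filter.Eventually.of_forall fun x => fun s _ => ?_
      simpa [mul_comm] using ((hasDerivAt_id s).mul_const (g x)).exp
  have hHpos : ∀ t, 0 < H t := by
    intro t
    have h1 : Real.exp (-(|t| * B)) ≤ H t := by
      rw [show Real.exp (-(|t| * B)) = ∫ _x, Real.exp (-(|t| * B)) ∂μ by
        simp [integral_const]]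
      apply integral_mono (integrable_const _) (hintexp t)
      intro x
      apply Real.exp_le_exp.2
      calc -(|t| * B) ≤ -|t * g x| := by
            rw [abs_mul]; nlinarith [abs_nonneg t, hB x]
        _ ≤ t * g x := neg_abs_le _
    linarith [Real.exp_pos (-(|t| * B))]
  -- the key differential inequality coming from LSI
  have key : ∀ t : ℝ, t * Hd t - Real.log (H t) * H t ≤ c * t ^ 2 * H t := by
    intro t
    set a : EuclideanSpace ℝ (Fin n) → ℝ := fun x => Real.exp (t * g x / 2) with hadef
    have ha : ContDiff ℝ (⊤ : ℕ∞) a := Real.contDiff_exp.comp ((contDiff_const.mul hg).div_const 2)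
    have hsq : ∀ x, a x ^ 2 = Real.exp (t * g x) := fun x => by
      rw [hadef, pow_two, ← Real.exp_add, add_halves]
    have hHt : (∫ y, a y ^ 2 ∂μ) = H t := by simp only [hsq]; rfl
    have hLSIa := hLSI a ha
    rw [hHt] at hLSIa
    have hlhs : (∫ x, a x ^ 2 * Real.log (a x ^ 2 / H t) ∂μ)
        = t * Hd t - Real.log (H t) * H t := by
      have h1 : ∀ x, a x ^ 2 * Real.log (a x ^ 2 / H t)
          = t * (Real.exp (t * g x) * g x) - Real.log (H t) * Real.exp (t * g x) := by
        intro x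
        rw [hsq, Real.log_div (Real.exp_ne_zero _) (hHpos t).ne', Real.log_exp]
        ring
      rw [integral_congr_ae (Filter.Eventually.of_forall h1),
        integral_sub ((hintexpg t).const_mul t) ((hintexp t).const_mul _),
        integral_const_mul, integral_const_mul]
    rw [hlhs] at hLSIa
    refine le_trans hLSIa ?_
    -- now bound the gradient term
    have hgrad : ∀ x, ‖gradient a x‖ ^ 2 ≤ Real.exp (t * g x) * (t ^ 2 / 4) * K := by
      intro x
      have hψ : HasDerivAt (fun s => Real.exp (t * s / 2))
          (Real.exp (t * g x / 2) * (t / 2)) (g x) := by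
        simpa using (((hasDerivAt_id (g x)).const_mul t).div_const 2).exp
      have hn := norm_gradient_comp (fun s => Real.exp (t * s / 2))
        ((hg.differentiable (by simp)).differentiableAt) hψ
      have hax : gradient a x = gradient (fun y => Real.exp (t * g y / 2)) x := rfl
      rw [hax, hn, mul_pow, abs_mul, mul_pow, sq_abs, sq_abs, hsq x]
      have h2 : ((t:ℝ)/2)^2 = t^2/4 := by ring
      rw [h2]
      exact mul_le_mul_of_nonneg_left (hKg x) (by positivity)
    have hint2 : Integrable (fun x => Real.exp (t * g x) * (t ^ 2 / 4) * K) μ :=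
      ((hintexp t).mul_const _).mul_const _
    have hmono2 : (∫ x, ‖gradient a x‖ ^ 2 ∂μ)
        ≤ ∫ x, Real.exp (t * g x) * (t ^ 2 / 4) * K ∂μ :=
      integral_mono_of_nonneg (Filter.Eventually.of_forall fun x => sq_nonneg _)
        hint2 (Filter.Eventually.of_forall hgrad)
    have hval : (∫ x, Real.exp (t * g x) * (t ^ 2 / 4) * K ∂μ) = H t * (t ^ 2 / 4) * K := by
      rw [integral_mul_const, integral_mul_const]
    have h4 : (2:ℝ) / ρ ≥ 0 := by positivity
    calc (2 / ρ) * ∫ x, ‖gradient a x‖ ^ 2 ∂μ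
        ≤ (2 / ρ) * (H t * (t ^ 2 / 4) * K) := by
          apply mul_le_mul_of_nonneg_left _ h4
          rw [← hval]; exact hmono2
      _ = c * t ^ 2 * H t := by rw [hc]; field_simp; ring
  -- the logarithmic derivative argument
  set u : ℝ → ℝ := fun t => Real.log (H t) with hudef
  have hu : ∀ t, HasDerivAt u (Hd t / H t) t := fun t => (hHder t).log (hHpos t).ne'
  have hH0 : H 0 = 1 := by simp [hH]
  have hu0 : u 0 = 0 := by simp [hudef, hH0]
  have hHd0 : Hd 0 = ∫ x, g x ∂μ := by simp [hHd]
  set F : ℝ → ℝ := fun t => u t / t with hFdef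
  have hFder : ∀ t : ℝ, t ≠ 0 →
      HasDerivAt F ((Hd t / H t * t - u t * 1) / t ^ 2) t := by
    intro t ht
    exact (hu t).div (hasDerivAt_id t) ht
  set G : ℝ → ℝ := fun t => c * t - F t with hGdef
  have hGder : ∀ t : ℝ, t ≠ 0 →
      HasDerivAt G (c - (Hd t / H t * t - u t * 1) / t ^ 2) t := by
    intro t ht
    have h1 : HasDerivAt (fun s : ℝ => c * s) (c * 1) t := (hasDerivAt_id t).const_mul c
    have := h1.sub (hFder t ht); simp only [mul_one] at this ⊢; exact this
  have hGnn : ∀ t : ℝ, 0 < t → 0 ≤ c - (Hd t / H t * t - u t * 1) / t ^ 2 := by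
    intro t ht
    have ht2 : (0:ℝ) < t ^ 2 := by positivity
    have h2 : (Hd t / H t * t - u t * 1) / t ^ 2 ≤ c := by
      rw [div_le_iff₀ ht2, mul_one, sub_le_iff_le_add]
      have h3 : Hd t / H t * t = t * Hd t / H t := by ring
      rw [h3, div_le_iff₀ (hHpos t)]
      have hk := key t
      have hut : u t = Real.log (H t) := rfl
      nlinarith [hk]
    linarith
  have hmono : ∀ s, s ∈ Set.Ioo 0 lam → F lam ≤ F s + c * (lam - s) := by
    intro s hs
    have hGm : MonotoneOn G (Set.Icc s lam) := by
      apply monotoneOn_of_deriv_nonneg (convex_Icc s lam)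
      · intro t ht
        exact ((hGder t (by rcases ht with ⟨h1, _⟩; linarith [hs.1])).continuousAt).continuousWithinAt
      · intro t ht
        rw [interior_Icc] at ht
        exact ((hGder t (by rcases ht with ⟨h1, _⟩; linarith [hs.1])).differentiableAt).differentiableWithinAt
      · intro t ht
        rw [interior_Icc] at ht
        have htpos : 0 < t := lt_trans hs.1 ht.1
        rw [(hGder t htpos.ne').deriv]
        exact hGnn t htpos
    have h5 := hGm (Set.left_mem_Icc.mpr hs.2.le) (Set.right_mem_Icc.mpr hs.2.le) hs.2.le
    have h6 : c * s - F s ≤ c * lam - F lam := h5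
    linarith
  have hslope : Filter.Tendsto F (nhdsWithin 0 (Set.Ioi 0)) (nhds (∫ x, g x ∂μ)) := by
    have h0 : HasDerivAt u (∫ x, g x ∂μ) 0 := by
      have h1 := hu 0
      rwa [hH0, hHd0, div_one] at h1
    have h1 := hasDerivAt_iff_tendsto_slope.mp h0
    have h2 : Filter.Tendsto (slope u 0) (nhdsWithin 0 (Set.Ioi 0)) (nhds (∫ x, g x ∂μ)) :=
      h1.mono_left (nhdsWithin_mono 0 (fun x hx => ne_of_gt hx))
    have h3 : slope u 0 = F := by
      funext s
      rw [slope_def_field, hu0, hFdef]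
      simp
    rwa [h3] at h2
  have hFlam : F lam ≤ (∫ x, g x ∂μ) + c * lam := by
    have hev : ∀ᶠ s in nhdsWithin 0 (Set.Ioi 0), F lam ≤ F s + c * (lam - s) := by
      filter_upwards [Ioo_mem_nhdsGT_of_mem (Set.left_mem_Ico.mpr hlam)] with s hs
      exact hmono s hs
    have hten : Filter.Tendsto (fun s => F s + c * (lam - s)) (nhdsWithin 0 (Set.Ioi 0))
        (nhds ((∫ x, g x ∂μ) + c * lam)) := by
      have hc2 : Filter.Tendsto (fun s : ℝ => c * (lam - s)) (nhdsWithin 0 (Set.Ioi 0))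
          (nhds (c * (lam - 0))) :=
        ((continuous_const.mul (continuous_const.sub continuous_id)).tendsto 0).mono_left
          nhdsWithin_le_nhds
      have := hslope.add hc2
      simpa using this
    exact ge_of_tendsto hten hev
  have hulam : u lam ≤ lam * (∫ x, g x ∂μ) + lam ^ 2 * K / (2 * ρ) := by
    have h1 : u lam / lam ≤ (∫ x, g x ∂μ) + c * lam := hFlam
    rw [div_le_iff₀ hlam] at h1
    calc u lam ≤ ((∫ x, g x ∂μ) + c * lam) * lam := h1
      _ = lam * (∫ x, g x ∂μ) + lam ^ 2 * K / (2 * ρ) := by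
          rw [hc]; field_simp
  calc H lam = Real.exp (u lam) := (Real.exp_log (hHpos lam)).symm
    _ ≤ _ := Real.exp_le_exp.2 hulam

lemma herbst_bounded [IsProbabilityMeasure μ] (hρ : 0 < ρ)
    (hLSI : ∀ g : EuclideanSpace ℝ (Fin n) → ℝ, ContDiff ℝ (⊤ : ℕ∞) g →
      ∫ x, (g x) ^ 2 * Real.log ((g x) ^ 2 / ∫ y, (g y) ^ 2 ∂μ) ∂μ ≤
        (2 / ρ) * ∫ x, ‖gradient g x‖ ^ 2 ∂μ)
    {K : ℝ} (hK0 : 0 ≤ K)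
    (g : EuclideanSpace ℝ (Fin n) → ℝ) (hg : ContDiff ℝ (⊤ : ℕ∞) g) (B : ℝ)
    (hB : ∀ x, |g x| ≤ B) (hKg : ∀ x, ‖gradient g x‖ ^ 2 ≤ K) (lam : ℝ) :
    ∫ x, Real.exp (lam * g x) ∂μ ≤
      Real.exp (lam * (∫ x, g x ∂μ) + lam ^ 2 * K / (2 * ρ)) := by
  rcases lt_trichotomy lam 0 with h | h | h
  · have hneg : ContDiff ℝ (⊤ : ℕ∞) (fun x => -g x) := hg.neg
    have hKneg : ∀ x, ‖gradient (fun y => -g y) x‖ ^ 2 ≤ K := by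
      intro x
      have hn := norm_gradient_comp (fun s : ℝ => -s)
        ((hg.differentiable (by simp)).differentiableAt)
        ((hasDerivAt_id' (g x)).neg)
      have : ‖gradient (fun y => -g y) x‖ = |(-1 : ℝ)| * ‖gradient g x‖ := hn
      rw [this]
      simpa using hKg x
    have hres := herbst_bounded_pos hρ hLSI hK0 _ hneg B
      (fun x => by simpa using hB x) hKneg (lam := -lam) (by linarith)
    have e1 : (∫ x, Real.exp (-lam * -g x) ∂μ) = ∫ x, Real.exp (lam * g x) ∂μ := by
      congr 1; funext x; rw [neg_mul_neg]
    have e2 : -lam * (∫ x, -g x ∂μ) + (-lam) ^ 2 * K / (2 * ρ)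
        = lam * (∫ x, g x ∂μ) + lam ^ 2 * K / (2 * ρ) := by
      rw [integral_neg]; ring
    rw [e1, e2] at hres
    exact hres
  · subst h
    have : (∫ x, Real.exp ((0:ℝ) * g x) ∂μ) = 1 := by simp
    rw [this]
    simp
  · exact herbst_bounded_pos hρ hLSI hK0 g hg B hB hKg h

end Herbst
lemma tendsto_arctan_scale (a : ℝ) :
    Filter.Tendsto (fun k : ℕ => ((k:ℝ)+1) * Real.arctan (a / ((k:ℝ)+1))) atTop (nhds a) := by
  rcases eq_or_ne a 0 with rfl | ha
  · simpa [Real.arctan_zero] using (tendsto_const_nhds : Tendsto (fun _ : ℕ => (0:ℝ)) atTop (nhds 0))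
  · have hg : Tendsto (fun k : ℕ => (k:ℝ)+1) atTop atTop :=
      tendsto_atTop_add_const_right _ 1 tendsto_natCast_atTop_atTop
    have h1 : Tendsto (fun k : ℕ => a / ((k:ℝ)+1)) atTop (nhds 0) :=
      Tendsto.div_atTop tendsto_const_nhds hg
    have h2 : Tendsto (fun k : ℕ => a / ((k:ℝ)+1)) atTop (nhdsWithin 0 {(0:ℝ)}ᶜ) := by
      apply tendsto_nhdsWithin_of_tendsto_nhds_of_eventually_within _ h1
      refine Filter.Eventually.of_forall fun k => ?_
      have hk : ((k:ℝ)+1) ≠ 0 := by positivity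
      simp [div_ne_zero ha hk]
    have h3 := hasDerivAt_iff_tendsto_slope.mp (Real.hasDerivAt_arctan 0)
    have h3' : Tendsto (slope Real.arctan 0) (nhdsWithin 0 {(0:ℝ)}ᶜ) (nhds 1) := by
      simpa using h3
    have h4 := (h3'.comp h2).const_mul a
    have h5 : (fun k : ℕ => a * (slope Real.arctan 0 ∘ fun k : ℕ => a / ((k:ℝ)+1)) k)
        = fun k : ℕ => ((k:ℝ)+1) * Real.arctan (a / ((k:ℝ)+1)) := by
      funext k
      have hk : ((k:ℝ)+1) ≠ 0 := by positivity
      simp only [Function.comp_apply, slope_def_field, Real.arctan_zero, sub_zero]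
      field_simp
    rw [h5] at h4
    simpa using h4

/-- Herbst argument, exponential moment step.  If `μ` satisfies the
log-Sobolev inequality with constant `ρ > 0`, then any smooth centered `f` with
`‖∇f‖² ≤ K` everywhere has sub-Gaussian Laplace transform:
`μ(e^{λf}) ≤ exp(λ²K/(2ρ))`. -/
theorem herbst_exponential_moment
    (n : ℕ) (ρ : ℝ) (hρ : 0 < ρ)
    (μ : Measure (EuclideanSpace ℝ (Fin n))) [IsProbabilityMeasure μ]
    (hLSI : ∀ g : EuclideanSpace ℝ (Fin n) → ℝ, ContDiff ℝ (⊤ : ℕ∞) g →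
      ∫ x, (g x) ^ 2 * Real.log ((g x) ^ 2 / ∫ y, (g y) ^ 2 ∂μ) ∂μ ≤
        (2 / ρ) * ∫ x, ‖gradient g x‖ ^ 2 ∂μ)
    (f : EuclideanSpace ℝ (Fin n) → ℝ) (hf : ContDiff ℝ (⊤ : ℕ∞) f)
    (hmean : ∫ x, f x ∂μ = 0)
    (K : ℝ) (hK : ∀ x, ‖gradient f x‖ ^ 2 ≤ K) (lam : ℝ) :
    ∫⁻ x, ENNReal.ofReal (Real.exp (lam * f x)) ∂μ ≤
      ENNReal.ofReal (Real.exp (lam ^ 2 * K / (2 * ρ))) := by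
  have hK0 : 0 ≤ K := le_trans (by positivity) (hK 0)
  set c : ℝ := K / (2 * ρ) with hc
  have hc0 : 0 ≤ c := by positivity
  set fk : ℕ → EuclideanSpace ℝ (Fin n) → ℝ :=
    fun k x => ((k:ℝ)+1) * Real.arctan (f x / ((k:ℝ)+1)) with hfkdef
  have hrpos : ∀ k : ℕ, (0:ℝ) < (k:ℝ)+1 := fun k => by positivity
  have hfkc : ∀ k, Continuous (fk k) :=
    fun k => continuous_const.mul (Real.continuous_arctan.comp (hf.continuous.div_const _))
  have hfks : ∀ k, ContDiff ℝ (⊤ : ℕ∞) (fk k) :=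
    fun k => contDiff_const.mul (Real.contDiff_arctan.comp (hf.div_const _))
  have hfkB : ∀ k x, |fk k x| ≤ ((k:ℝ)+1) * (Real.pi/2) := by
    intro k x
    rw [hfkdef, abs_mul, abs_of_pos (hrpos k)]
    apply mul_le_mul_of_nonneg_left _ (hrpos k).le
    rw [abs_le]
    exact ⟨(Real.neg_pi_div_two_lt_arctan _).le, (Real.arctan_lt_pi_div_two _).le⟩
  have hfkabs : ∀ k x, |fk k x| ≤ |f x| := by
    intro k x
    rw [hfkdef, abs_mul, abs_of_pos (hrpos k)]
    calc ((k:ℝ)+1) * |Real.arctan (f x / ((k:ℝ)+1))|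
        ≤ ((k:ℝ)+1) * |f x / ((k:ℝ)+1)| :=
          mul_le_mul_of_nonneg_left (abs_arctan_le _) (hrpos k).le
      _ = |f x| := by
          rw [abs_div, abs_of_pos (hrpos k)]
          field_simp
  have hfkK : ∀ k x, ‖gradient (fk k) x‖ ^ 2 ≤ K := by
    intro k x
    set r : ℝ := (k:ℝ)+1 with hrdef
    have hr : (0:ℝ) < r := hrpos k
    have hψ : HasDerivAt (fun s : ℝ => r * Real.arctan (s / r))
        (r * (1 / (1 + (f x / r) ^ 2) * (1 / r))) (f x) := by
      have := (((hasDerivAt_id (f x)).div_const r).arctan).const_mul r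
      simpa using this
    have hn := norm_gradient_comp (fun s : ℝ => r * Real.arctan (s / r))
      ((hf.differentiable (by simp)).differentiableAt) hψ
    have hd : |r * (1 / (1 + (f x / r) ^ 2) * (1 / r))| ≤ 1 := by
      have h1 : r * (1 / (1 + (f x / r) ^ 2) * (1 / r)) = 1 / (1 + (f x / r) ^ 2) := by
        field_simp
      rw [h1, abs_of_pos (by positivity), div_le_one (by positivity)]
      nlinarith [sq_nonneg (f x / r)]
    have hgr : ‖gradient (fk k) x‖ = |r * (1 / (1 + (f x / r) ^ 2) * (1 / r))| * ‖gradient f x‖ := hn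
    rw [hgr, mul_pow]
    have h2 := hK x
    have h3 : |r * (1 / (1 + (f x / r) ^ 2) * (1 / r))| ^ 2 ≤ 1 := by
      have := abs_nonneg (r * (1 / (1 + (f x / r) ^ 2) * (1 / r)))
      nlinarith
    nlinarith [sq_nonneg ‖gradient f x‖]
  have hfkt : ∀ x, Tendsto (fun k => fk k x) atTop (nhds (f x)) :=
    fun x => tendsto_arctan_scale (f x)
  have hbint : ∀ h : EuclideanSpace ℝ (Fin n) → ℝ, Continuous h →
      (∃ C, ∀ x, |h x| ≤ C) → Integrable h μ := by
    rintro h hhc ⟨C, hC⟩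
    exact (integrable_const C).mono' hhc.aestronglyMeasurable
      (Filter.Eventually.of_forall fun x => by simpa [Real.norm_eq_abs] using hC x)
  have hfkint : ∀ k, Integrable (fk k) μ :=
    fun k => hbint _ (hfkc k) ⟨_, hfkB k⟩
  set ck : ℕ → ℝ := fun k => ∫ x, fk k x ∂μ with hckdef
  have hHb : ∀ (k : ℕ) (t : ℝ), (∫ x, Real.exp (t * fk k x) ∂μ)
      ≤ Real.exp (t * ck k + t ^ 2 * K / (2 * ρ)) :=
    fun k t => herbst_bounded hρ hLSI hK0 _ (hfks k) _ (hfkB k) (hfkK k) t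
  have hintexpfk : ∀ (k : ℕ) (t : ℝ), Integrable (fun x => Real.exp (t * fk k x)) μ := by
    intro k t
    refine hbint _ (Real.continuous_exp.comp (continuous_const.mul (hfkc k)))
      ⟨Real.exp (|t| * (((k:ℝ)+1) * (Real.pi/2))), fun x => ?_⟩
    rw [abs_of_pos (Real.exp_pos _)]
    apply Real.exp_le_exp.2
    calc t * fk k x ≤ |t * fk k x| := le_abs_self _
      _ = |t| * |fk k x| := abs_mul _ _
      _ ≤ |t| * (((k:ℝ)+1) * (Real.pi/2)) :=
          mul_le_mul_of_nonneg_left (hfkB k x) (abs_nonneg t)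
  -- a set of large measure on which f is bounded
  obtain ⟨M, hM⟩ : ∃ M : ℕ, ENNReal.ofReal (3/4) < μ {x | |f x| ≤ (M:ℝ)} := by
    have hmono : Monotone (fun m : ℕ => {x : EuclideanSpace ℝ (Fin n) | |f x| ≤ (m:ℝ)}) := by
      intro i j hij x hx
      simp only [Set.mem_setOf_eq] at hx ⊢
      exact le_trans hx (Nat.cast_le.mpr hij)
    have hunion : (⋃ m : ℕ, {x : EuclideanSpace ℝ (Fin n) | |f x| ≤ (m:ℝ)}) = Set.univ := by
      ext x
      simp only [Set.mem_iUnion, Set.mem_setOf_eq, Set.mem_univ, iff_true]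
      exact exists_nat_ge |f x|
    have htend := tendsto_measure_iUnion_atTop (μ := μ) hmono
    rw [hunion, measure_univ] at htend
    have hlt : ENNReal.ofReal (3/4) < 1 := ENNReal.ofReal_lt_one.mpr (by norm_num)
    exact (htend.eventually (lt_mem_nhds hlt)).exists
  set r₀ : ℝ := c + 2 with hr₀def
  -- a Markov-type bound
  have markov : ∀ h : EuclideanSpace ℝ (Fin n) → ℝ, Continuous h → (∃ C, ∀ x, |h x| ≤ C) →
      ((∫ x, Real.exp (h x) ∂μ) ≤ Real.exp c) →
      μ {x | r₀ ≤ h x} ≤ ENNReal.ofReal (Real.exp (-2)) := by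
    rintro h hhc hCb hle
    have hinth : Integrable (fun x => Real.exp (h x)) μ := by
      rcases hCb with ⟨C, hC⟩
      refine hbint _ (Real.continuous_exp.comp hhc) ⟨Real.exp C, fun x => ?_⟩
      rw [abs_of_pos (Real.exp_pos _)]
      exact Real.exp_le_exp.2 (le_trans (le_abs_self _) (hC x))
    have h1 : {x : EuclideanSpace ℝ (Fin n) | r₀ ≤ h x}
        = {x | ENNReal.ofReal (Real.exp r₀) ≤ ENNReal.ofReal (Real.exp (h x))} := by
      ext x
      simp only [Set.mem_setOf_eq]
      rw [ENNReal.ofReal_le_ofReal_iff (Real.exp_pos _).le, Real.exp_le_exp]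
    have h2 := mul_meas_ge_le_lintegral₀ (μ := μ)
      (f := fun x => ENNReal.ofReal (Real.exp (h x)))
      ((ENNReal.measurable_ofReal.comp (Real.continuous_exp.comp hhc).measurable).aemeasurable)
      (ENNReal.ofReal (Real.exp r₀))
    have h3 : (∫⁻ x, ENNReal.ofReal (Real.exp (h x)) ∂μ) ≤ ENNReal.ofReal (Real.exp c) := by
      rw [← ofReal_integral_eq_lintegral_ofReal hinth
        (Filter.Eventually.of_forall fun x => (Real.exp_pos _).le)]
      exact ENNReal.ofReal_le_ofReal hle
    have h4 : ENNReal.ofReal (Real.exp r₀) * μ {x | r₀ ≤ h x} ≤ ENNReal.ofReal (Real.exp c) := by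
      rw [h1]
      exact le_trans h2 h3
    have h5 : μ {x | r₀ ≤ h x} ≤ ENNReal.ofReal (Real.exp c) / ENNReal.ofReal (Real.exp r₀) := by
      rw [ENNReal.le_div_iff_mul_le
        (Or.inl (by simp [Real.exp_pos] : ENNReal.ofReal (Real.exp r₀) ≠ 0))
        (Or.inl ENNReal.ofReal_ne_top)]
      rw [mul_comm]
      exact h4
    refine le_trans h5 (le_of_eq ?_)
    rw [← ENNReal.ofReal_div_of_pos (Real.exp_pos _), ← Real.exp_sub]
    congr 1
    rw [hr₀def]
    ring
  have hexpneg2 : Real.exp (-2) ≤ 1/4 := by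
    have he1 : (2.7182818283:ℝ) < Real.exp 1 := Real.exp_one_gt_d9
    have he2 : (4:ℝ) < Real.exp 2 := by
      have : Real.exp 2 = Real.exp 1 * Real.exp 1 := by
        rw [← Real.exp_add]; norm_num
      nlinarith
    have h3 : 0 < Real.exp 2 := Real.exp_pos 2
    have h4 := mul_inv_cancel₀ h3.ne'
    rw [Real.exp_neg]
    nlinarith [inv_nonneg.mpr h3.le]
  have hck_bd : ∀ k, |ck k| ≤ (M:ℝ) + r₀ := by
    intro k
    have hplus : μ {x | r₀ ≤ fk k x - ck k} ≤ ENNReal.ofReal (Real.exp (-2)) := by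
      apply markov (fun x => fk k x - ck k) ((hfkc k).sub continuous_const)
        ⟨((k:ℝ)+1) * (Real.pi/2) + |ck k|, fun x => by
          have h1 := hfkB k x
          have h2 := abs_sub (fk k x) (ck k)
          linarith⟩
      have h6 := hHb k 1
      simp only [one_mul, one_pow] at h6
      have h8 : (∫ x, Real.exp (fk k x - ck k) ∂μ)
          = (∫ x, Real.exp (fk k x) ∂μ) * Real.exp (-ck k) := by
        rw [← integral_mul_const]
        congr 1
        funext x
        rw [sub_eq_add_neg, Real.exp_add]
      rw [h8]
      calc (∫ x, Real.exp (fk k x) ∂μ) * Real.exp (-ck k)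
          ≤ Real.exp (ck k + K/(2*ρ)) * Real.exp (-ck k) := by
            exact mul_le_mul_of_nonneg_right h6 (Real.exp_pos _).le
        _ = Real.exp c := by rw [← Real.exp_add, hc]; congr 1; ring
    have hminus : μ {x | r₀ ≤ ck k - fk k x} ≤ ENNReal.ofReal (Real.exp (-2)) := by
      apply markov (fun x => ck k - fk k x) (continuous_const.sub (hfkc k))
        ⟨((k:ℝ)+1) * (Real.pi/2) + |ck k|, fun x => by
          have h1 := hfkB k x
          have h2 := abs_sub (fk k x) (ck k)
          rw [abs_sub_comm]
          linarith⟩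
      have h6 := hHb k (-1)
      have h8 : (∫ x, Real.exp (ck k - fk k x) ∂μ)
          = (∫ x, Real.exp ((-1) * fk k x) ∂μ) * Real.exp (ck k) := by
        rw [← integral_mul_const]
        congr 1
        funext x
        rw [show ck k - fk k x = (-1) * fk k x + ck k by ring, Real.exp_add]
      rw [h8]
      calc (∫ x, Real.exp ((-1) * fk k x) ∂μ) * Real.exp (ck k)
          ≤ Real.exp ((-1) * ck k + (-1)^2 * K/(2*ρ)) * Real.exp (ck k) := by
            apply mul_le_mul_of_nonneg_right h6 (Real.exp_pos _).le
        _ = Real.exp c := by rw [← Real.exp_add, hc]; congr 1; ring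
    by_contra hcon
    push_neg at hcon
    have hsub : {x : EuclideanSpace ℝ (Fin n) | |f x| ≤ (M:ℝ)}
        ⊆ {x | r₀ ≤ fk k x - ck k} ∪ {x | r₀ ≤ ck k - fk k x} := by
      intro x hx
      have h7 : |fk k x| ≤ (M:ℝ) := le_trans (hfkabs k x) hx
      have h9 : r₀ ≤ |fk k x - ck k| := by
        have h10 := abs_sub_abs_le_abs_sub (ck k) (fk k x)
        have h11 : |ck k - fk k x| = |fk k x - ck k| := abs_sub_comm _ _
        linarith
      rcases le_abs.mp h9 with h12 | h12
      · exact Or.inl h12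
      · exact Or.inr (by simpa [neg_sub] using h12)
    have h8 : ENNReal.ofReal (3/4) < μ ({x | r₀ ≤ fk k x - ck k} ∪ {x | r₀ ≤ ck k - fk k x}) :=
      lt_of_lt_of_le hM (measure_mono hsub)
    have h9 : μ ({x | r₀ ≤ fk k x - ck k} ∪ {x | r₀ ≤ ck k - fk k x})
        ≤ ENNReal.ofReal (Real.exp (-2) + Real.exp (-2)) := by
      rw [ENNReal.ofReal_add (Real.exp_pos _).le (Real.exp_pos _).le]
      exact le_trans (measure_union_le _ _) (add_le_add hplus hminus)
    have h10 : ENNReal.ofReal (Real.exp (-2) + Real.exp (-2)) ≤ ENNReal.ofReal (1/2) :=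
      ENNReal.ofReal_le_ofReal (by linarith)
    have h11 : ENNReal.ofReal (3/4) < ENNReal.ofReal (1/2) :=
      lt_of_lt_of_le (lt_of_lt_of_le h8 h9) h10
    rw [ENNReal.ofReal_lt_ofReal_iff (by norm_num)] at h11
    norm_num at h11
  -- integrability of f
  have hexpk : ∀ k, (∫⁻ x, ENNReal.ofReal (Real.exp |fk k x|) ∂μ)
      ≤ ENNReal.ofReal (2 * Real.exp ((M:ℝ) + r₀ + c)) := by
    intro k
    have h1 : ∀ x, Real.exp |fk k x| ≤ Real.exp (fk k x) + Real.exp (-fk k x) := by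
      intro x
      rcases abs_cases (fk k x) with ⟨he, _⟩ | ⟨he, _⟩ <;> rw [he] <;>
        nlinarith [Real.exp_pos (fk k x), Real.exp_pos (-fk k x)]
    have hintsum : Integrable (fun x => Real.exp (fk k x) + Real.exp (-fk k x)) μ := by
      have ha := hintexpfk k 1
      have hb := hintexpfk k (-1)
      simp only [one_mul, neg_one_mul] at ha hb
      exact ha.add hb
    calc (∫⁻ x, ENNReal.ofReal (Real.exp |fk k x|) ∂μ)
        ≤ ∫⁻ x, ENNReal.ofReal (Real.exp (fk k x) + Real.exp (-fk k x)) ∂μ :=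
          lintegral_mono fun x => ENNReal.ofReal_le_ofReal (h1 x)
      _ = ENNReal.ofReal (∫ x, (Real.exp (fk k x) + Real.exp (-fk k x)) ∂μ) :=
          (ofReal_integral_eq_lintegral_ofReal hintsum
            (Filter.Eventually.of_forall fun x => by positivity)).symm
      _ ≤ ENNReal.ofReal (2 * Real.exp ((M:ℝ) + r₀ + c)) := by
          apply ENNReal.ofReal_le_ofReal
          have ha := hintexpfk k 1
          have hb := hintexpfk k (-1)
          simp only [one_mul, neg_one_mul] at ha hb
          rw [integral_add ha hb]
          have h2 := hHb k 1
          have h3 := hHb k (-1)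
          simp only [one_mul, one_pow] at h2
          have h4 : (∫ x, Real.exp (-fk k x) ∂μ) ≤ Real.exp (-ck k + K/(2*ρ)) := by
            calc (∫ x, Real.exp (-fk k x) ∂μ) = ∫ x, Real.exp ((-1) * fk k x) ∂μ := by
                  congr 1; funext x; rw [neg_one_mul]
              _ ≤ Real.exp ((-1) * ck k + (-1)^2 * K/(2*ρ)) := hHb k (-1)
              _ = Real.exp (-ck k + K/(2*ρ)) := by norm_num
          have hcb := hck_bd k
          have h5 : ck k ≤ (M:ℝ) + r₀ := le_trans (le_abs_self _) hcb
          have h6 : -ck k ≤ (M:ℝ) + r₀ := le_trans (neg_le_abs _) hcb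
          have h7 : (∫ x, Real.exp (fk k x) ∂μ) ≤ Real.exp ((M:ℝ) + r₀ + c) := by
            refine le_trans h2 (Real.exp_le_exp.2 ?_)
            rw [hc]; linarith
          have h8 : (∫ x, Real.exp (-fk k x) ∂μ) ≤ Real.exp ((M:ℝ) + r₀ + c) := by
            refine le_trans h4 (Real.exp_le_exp.2 ?_)
            rw [hc]; linarith
          linarith
  have hf_int : Integrable f μ := by
    refine ⟨hf.continuous.aestronglyMeasurable, ?_⟩
    have h2 : (∫⁻ x, ENNReal.ofReal (Real.exp |f x|) ∂μ)
        ≤ ENNReal.ofReal (2 * Real.exp ((M:ℝ) + r₀ + c)) := by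
      have hpt : ∀ x, Filter.Tendsto (fun k => ENNReal.ofReal (Real.exp |fk k x|)) atTop
          (nhds (ENNReal.ofReal (Real.exp |f x|))) := by
        intro x
        exact (ENNReal.continuous_ofReal.tendsto _).comp
          ((Real.continuous_exp.tendsto _).comp ((continuous_abs.tendsto _).comp (hfkt x)))
      calc (∫⁻ x, ENNReal.ofReal (Real.exp |f x|) ∂μ)
          = ∫⁻ x, liminf (fun k => ENNReal.ofReal (Real.exp |fk k x|)) atTop ∂μ := by
            congr 1; funext x; exact ((hpt x).liminf_eq).symm
        _ ≤ liminf (fun k => ∫⁻ x, ENNReal.ofReal (Real.exp |fk k x|) ∂μ) atTop :=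
            lintegral_liminf_le fun k =>
              ENNReal.measurable_ofReal.comp
                (Real.continuous_exp.comp (continuous_abs.comp (hfkc k))).measurable
        _ ≤ ENNReal.ofReal (2 * Real.exp ((M:ℝ) + r₀ + c)) := by
            refine le_trans (Filter.liminf_le_liminf (Filter.Eventually.of_forall hexpk)) ?_
            simp
    rw [HasFiniteIntegral]
    have h3 : ∀ x : EuclideanSpace ℝ (Fin n), (‖f x‖₊ : ENNReal) ≤ ENNReal.ofReal (Real.exp |f x|) := by
      intro x
      rw [← enorm_eq_nnnorm, ← ofReal_norm, Real.norm_eq_abs]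
      apply ENNReal.ofReal_le_ofReal
      have := Real.add_one_le_exp |f x|
      linarith
    exact lt_of_le_of_lt (le_trans (lintegral_mono h3) h2) ENNReal.ofReal_lt_top
  -- the truncated means converge to 0
  have hck0 : Filter.Tendsto ck atTop (nhds 0) := by
    rw [← hmean]
    exact tendsto_integral_of_dominated_convergence (fun x => |f x|)
      (fun k => (hfkc k).aestronglyMeasurable) hf_int.abs
      (fun k => Filter.Eventually.of_forall fun x => by
        simpa [Real.norm_eq_abs] using hfkabs k x)
      (Filter.Eventually.of_forall hfkt)
  -- Fatou and conclusion
  calc (∫⁻ x, ENNReal.ofReal (Real.exp (lam * f x)) ∂μ)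
      = ∫⁻ x, liminf (fun k => ENNReal.ofReal (Real.exp (lam * fk k x))) atTop ∂μ := by
        congr 1; funext x
        refine (Filter.Tendsto.liminf_eq ?_).symm
        exact (ENNReal.continuous_ofReal.tendsto _).comp
          ((Real.continuous_exp.tendsto _).comp (((hfkt x).const_mul lam)))
    _ ≤ liminf (fun k => ∫⁻ x, ENNReal.ofReal (Real.exp (lam * fk k x)) ∂μ) atTop :=
        lintegral_liminf_le fun k =>
          ENNReal.measurable_ofReal.comp
            (Real.continuous_exp.comp (continuous_const.mul (hfkc k))).measurable
    _ ≤ liminf (fun k => ENNReal.ofReal (Real.exp (lam * ck k + lam ^ 2 * K / (2 * ρ)))) atTop := by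
        refine Filter.liminf_le_liminf (Filter.Eventually.of_forall fun k => ?_)
        rw [← ofReal_integral_eq_lintegral_ofReal (hintexpfk k lam)
          (Filter.Eventually.of_forall fun x => (Real.exp_pos _).le)]
        exact ENNReal.ofReal_le_ofReal (hHb k lam)
    _ = ENNReal.ofReal (Real.exp (lam ^ 2 * K / (2 * ρ))) := by
        apply Filter.Tendsto.liminf_eq
        have h1 : Filter.Tendsto (fun k => lam * ck k + lam ^ 2 * K / (2 * ρ)) atTop
            (nhds (lam * 0 + lam ^ 2 * K / (2 * ρ))) :=
          Filter.Tendsto.add_const _ (hck0.const_mul lam)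
        rw [mul_zero, zero_add] at h1
        exact (ENNReal.continuous_ofReal.tendsto _).comp
          ((Real.continuous_exp.tendsto _).comp h1)
end

section
/- Let V = Σ_{j=1}^n t_j q_j with monomials q_j of degree at most D, and let B be the total number of monomials appearing in the cyclic derivatives D_1 V,…,D_m V. Define Ξ₁(P) = Π(Σ_k ∂_k ΣP ♯ D_k V) on ℂ₀⟨X_1,…,X_m⟩. Then for any A > 1, Ξ₁ is bounded for ‖·‖_A with ‖Ξ₁‖_A ≤ |t| B A^{D-2}, where |t| = max_j |t_j|. In particular, ‖Ξ₁‖_A ≤ ε whenever |t| < ε/(B A^{D-2}). -/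
/-- The projection `Π` killing the constant term. -/
noncomputable def proj0 {m : ℕ} (P : NCPoly m) : NCPoly m :=
  P - Finsupp.single [] (P [])

/-- The operator `Ξ₁(P) = Π(Σ_k ∂_k Σ P ♯ D_k V)`. -/
noncomputable def Xi1 {m : ℕ} (V : NCPoly m) (P : NCPoly m) : NCPoly m :=
  proj0 (∑ k : Fin m, sharp (der k (sig P)) (cder k V))

/-- The norm `‖P‖_A = Σ_q |λ_q(P)| A^{deg q}`. -/
noncomputable def Anorm {m : ℕ} (A : ℝ) (P : NCPoly m) : ℝ :=
  P.sum fun w c => ‖c‖ * A ^ w.length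

/-!
Dividing a monomial of degree `d` by `d` (the map `Σ`) exactly compensates the at most `d` terms
of its noncommutative derivative, each of norm `A^{d-1}`; hence `A ‖∂_k Σ P‖_A ≤ ‖P‖_A` for every
`k`. As `♯` is submultiplicative and `Π` contracts, `A² ‖Ξ₁ P‖_A ≤ ‖P‖_A · A Σ_k ‖D_k V‖_A`, and
`A Σ_k ‖D_k q‖_A = deg q · A^{deg q} ≤ deg q · A^D` for a monomial `q`.
-/

open Finset

namespace Finsupp

variable {α E : Type*} [SeminormedAddCommGroup E]

noncomputable def weightedNorm (ω : α → ℝ) (f : α →₀ E) : ℝ :=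
  f.sum fun a c => ‖c‖ * ω a

variable {ω : α → ℝ}

theorem weightedNorm_eq_sum_of_support_subset (f : α →₀ E) {s : Finset α}
    (hs : f.support ⊆ s) : weightedNorm ω f = ∑ a ∈ s, ‖f a‖ * ω a :=
  f.sum_of_support_subset hs _ fun a _ => by simp

@[simp]
theorem weightedNorm_zero : weightedNorm ω (0 : α →₀ E) = 0 := by
  simp [weightedNorm]

@[simp]
theorem weightedNorm_single (a : α) (c : E) : weightedNorm ω (single a c) = ‖c‖ * ω a := by
  simp [weightedNorm]

theorem weightedNorm_nonneg (hω : ∀ a, 0 ≤ ω a) (f : α →₀ E) : 0 ≤ weightedNorm ω f :=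
  sum_nonneg fun a _ => mul_nonneg (norm_nonneg _) (hω a)

theorem weightedNorm_add_le (hω : ∀ a, 0 ≤ ω a) (f g : α →₀ E) :
    weightedNorm ω (f + g) ≤ weightedNorm ω f + weightedNorm ω g := by
  classical
  rw [weightedNorm_eq_sum_of_support_subset _ support_add,
    weightedNorm_eq_sum_of_support_subset f subset_union_left,
    weightedNorm_eq_sum_of_support_subset g subset_union_right, ← sum_add_distrib]
  refine Finset.sum_le_sum fun a _ => ?_
  rw [← add_mul]
  exact mul_le_mul_of_nonneg_right (norm_add_le _ _) (hω a)

theorem weightedNorm_sum_le (hω : ∀ a, 0 ≤ ω a) {ι : Type*} (s : Finset ι)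
    (f : ι → α →₀ E) : weightedNorm ω (∑ i ∈ s, f i) ≤ ∑ i ∈ s, weightedNorm ω (f i) :=
  le_sum_of_subadditive _ weightedNorm_zero.le (weightedNorm_add_le hω) s f

theorem weightedNorm_smul {𝕜 : Type*} [NormedField 𝕜] [NormedSpace 𝕜 E] (c : 𝕜)
    (f : α →₀ E) : weightedNorm ω (c • f) = ‖c‖ * weightedNorm ω f := by
  rw [weightedNorm_eq_sum_of_support_subset _ support_smul, weightedNorm, Finsupp.sum,
    Finset.mul_sum]
  simp only [smul_apply, norm_smul, mul_assoc]

theorem weightedNorm_erase_le (hω : ∀ a, 0 ≤ ω a) (f : α →₀ E) (a : α) :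
    weightedNorm ω (f.erase a) ≤ weightedNorm ω f := by
  classical
  rw [weightedNorm_eq_sum_of_support_subset _ support_erase.subset, weightedNorm]
  calc ∑ b ∈ f.support.erase a, ‖f.erase a b‖ * ω b
      = ∑ b ∈ f.support.erase a, ‖f b‖ * ω b :=
        Finset.sum_congr rfl fun b hb => by rw [erase_ne (ne_of_mem_erase hb)]
    _ ≤ ∑ b ∈ f.support, ‖f b‖ * ω b :=
        sum_le_sum_of_subset_of_nonneg (erase_subset a _) fun b _ _ =>
          mul_nonneg (norm_nonneg _) (hω b)

end Finsupp

open Finsupp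

section

variable {m : ℕ}

/-- The projective tensor norm `‖·‖_A ⊗ ‖·‖_A` on `ℂ⟨X⟩ ⊗ ℂ⟨X⟩`. -/
noncomputable def Anorm₂ (A : ℝ) (T : NCPoly₂ m) : ℝ :=
  weightedNorm (fun rs : Word m × Word m => A ^ (rs.1.length + rs.2.length)) T

theorem Anorm_eq_weightedNorm (A : ℝ) (P : NCPoly m) :
    Anorm A P = weightedNorm (fun w : Word m => A ^ w.length) P :=
  rfl

theorem Anorm_nonneg {A : ℝ} (hA : 0 ≤ A) (P : NCPoly m) : 0 ≤ Anorm A P :=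
  weightedNorm_nonneg (fun _ => pow_nonneg hA _) P

theorem Anorm_proj0_le {A : ℝ} (hA : 0 ≤ A) (P : NCPoly m) : Anorm A (proj0 P) ≤ Anorm A P := by
  rw [proj0, ← erase_eq_sub_single]
  exact weightedNorm_erase_le (fun _ => pow_nonneg hA _) P []

theorem Anorm_sharp_le {A : ℝ} (hA : 0 ≤ A) (T : NCPoly₂ m) (Q : NCPoly m) :
    Anorm A (sharp T Q) ≤ Anorm₂ A T * Anorm A Q := by
  have hω : ∀ w : Word m, 0 ≤ A ^ w.length := fun _ => pow_nonneg hA _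
  calc Anorm A (sharp T Q)
      ≤ ∑ rs ∈ T.support, ∑ u ∈ Q.support,
          ‖T rs * Q u‖ * A ^ (rs.1 ++ u ++ rs.2).length := by
        refine (weightedNorm_sum_le hω _ _).trans (Finset.sum_le_sum fun rs _ => ?_)
        refine (weightedNorm_sum_le hω _ _).trans_eq ?_
        simp only [weightedNorm_single]
    _ = Anorm₂ A T * Anorm A Q := by
        rw [Anorm₂, Anorm_eq_weightedNorm, weightedNorm, weightedNorm, Finsupp.sum, Finsupp.sum,
          Finset.sum_mul_sum]
        refine Finset.sum_congr rfl fun rs _ => Finset.sum_congr rfl fun u _ => ?_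
        simp only [norm_mul, List.length_append, pow_add]
        ring

theorem mul_Anorm₂_derW_le {A : ℝ} (hA : 0 ≤ A) (k : Fin m) (w : Word m) :
    A * Anorm₂ A (derW k w) ≤ w.length * A ^ w.length := by
  have hω : ∀ rs : Word m × Word m, 0 ≤ A ^ (rs.1.length + rs.2.length) :=
    fun _ => pow_nonneg hA _
  rw [Anorm₂, derW]
  refine (mul_le_mul_of_nonneg_left (weightedNorm_sum_le hω _ _) hA).trans ?_
  rw [Finset.mul_sum]
  calc ∑ i : Fin w.length, A * weightedNorm _ (if w.get i = k then _ else 0)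
      ≤ ∑ _i : Fin w.length, A ^ w.length := Finset.sum_le_sum fun i _ => ?_
    _ = w.length * A ^ w.length := by simp
  split_ifs
  · have := i.isLt
    simp only [weightedNorm_single, norm_one, one_mul, List.length_take, List.length_drop,
      ← pow_succ']
    exact le_of_eq (by congr 1; omega)
  · simpa using pow_nonneg hA _

theorem mul_sum_Anorm_cderW_le {A : ℝ} (hA : 0 ≤ A) (w : Word m) :
    A * ∑ k : Fin m, Anorm A (cderW k w) ≤ w.length * A ^ w.length := by
  have hω : ∀ u : Word m, 0 ≤ A ^ u.length := fun _ => pow_nonneg hA _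
  calc A * ∑ k : Fin m, Anorm A (cderW k w)
      ≤ A * ∑ k : Fin m, ∑ i : Fin w.length, Anorm A
          (if w.get i = k then single (w.drop (i.1 + 1) ++ w.take i.1) 1 else 0) := by
        gcongr with k
        exact weightedNorm_sum_le hω _ _
    _ = ∑ i : Fin w.length, A * A ^ (w.drop (i.1 + 1) ++ w.take i.1).length := by
        rw [Finset.sum_comm, Finset.mul_sum]
        refine Finset.sum_congr rfl fun i _ => ?_
        simp only [apply_ite (Anorm A), Anorm_eq_weightedNorm, weightedNorm_single,
          weightedNorm_zero, norm_one, one_mul, Finset.sum_ite_eq, Finset.mem_univ, if_true]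
    _ = ∑ _i : Fin w.length, A ^ w.length := by
        refine Finset.sum_congr rfl fun i _ => ?_
        have := i.isLt
        rw [← pow_succ']
        congr 1
        simp only [List.length_append, List.length_take, List.length_drop]
        omega
    _ = w.length * A ^ w.length := by simp

theorem der_sig_single (k : Fin m) {w : Word m} (hw : w ≠ []) (c : ℂ) :
    der k (sig (single w c)) = (c / w.length) • derW k w := by
  rw [sig, lsum_single, LinearMap.toSpanSingleton_apply, if_neg (by simpa using hw), smul_smul,
    map_smul, der, lsum_single, LinearMap.toSpanSingleton_apply, one_smul, div_eq_mul_inv]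

theorem mul_Anorm₂_der_sig_single_le {A : ℝ} (hA : 0 ≤ A) (k : Fin m) {w : Word m}
    (hw : w ≠ []) (c : ℂ) : A * Anorm₂ A (der k (sig (single w c))) ≤ ‖c‖ * A ^ w.length := by
  have hlen : (w.length : ℝ) ≠ 0 := by simpa using hw
  rw [der_sig_single k hw, Anorm₂, weightedNorm_smul, ← Anorm₂]
  calc A * (‖c / w.length‖ * Anorm₂ A (derW k w))
      = ‖c‖ / w.length * (A * Anorm₂ A (derW k w)) := by
        rw [norm_div, Complex.norm_natCast]
        ring
    _ ≤ ‖c‖ / w.length * (w.length * A ^ w.length) :=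
        mul_le_mul_of_nonneg_left (mul_Anorm₂_derW_le hA k w) (by positivity)
    _ = ‖c‖ * A ^ w.length := by field_simp

theorem mul_Anorm₂_der_sig_le {A : ℝ} (hA : 0 ≤ A) (k : Fin m) {P : NCPoly m}
    (hP : P [] = 0) : A * Anorm₂ A (der k (sig P)) ≤ Anorm A P := by
  have hω : ∀ rs : Word m × Word m, 0 ≤ A ^ (rs.1.length + rs.2.length) :=
    fun _ => pow_nonneg hA _
  conv_lhs => rw [← P.sum_single, Finsupp.sum, map_sum, map_sum]
  refine (mul_le_mul_of_nonneg_left (weightedNorm_sum_le hω _ _) hA).trans ?_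
  rw [Finset.mul_sum]
  refine Finset.sum_le_sum fun w hw => mul_Anorm₂_der_sig_single_le hA k ?_ (P w)
  rintro rfl
  exact mem_support_iff.mp hw hP

theorem sq_mul_Anorm_Xi1_le {A : ℝ} (hA : 0 ≤ A) (V : NCPoly m) {P : NCPoly m}
    (hP : P [] = 0) :
    A ^ 2 * Anorm A (Xi1 V P) ≤ Anorm A P * (A * ∑ k, Anorm A (cder k V)) := by
  have hω : ∀ w : Word m, 0 ≤ A ^ w.length := fun _ => pow_nonneg hA _
  calc A ^ 2 * Anorm A (Xi1 V P)
      ≤ A ^ 2 * ∑ k, Anorm₂ A (der k (sig P)) * Anorm A (cder k V) := by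
        gcongr
        refine (Anorm_proj0_le hA _).trans ((weightedNorm_sum_le hω _ _).trans ?_)
        exact Finset.sum_le_sum fun k _ => Anorm_sharp_le hA _ _
    _ = ∑ k, (A * Anorm₂ A (der k (sig P))) * (A * Anorm A (cder k V)) := by
        rw [Finset.mul_sum]
        exact Finset.sum_congr rfl fun k _ => by ring
    _ ≤ ∑ k, Anorm A P * (A * Anorm A (cder k V)) := by
        gcongr with k
        · exact mul_nonneg hA (Anorm_nonneg hA _)
        · exact mul_Anorm₂_der_sig_le hA k hP
    _ = Anorm A P * (A * ∑ k, Anorm A (cder k V)) := by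
        rw [Finset.mul_sum, Finset.mul_sum]

theorem cder_sum_smul_single {n : ℕ} (k : Fin m) (t : Fin n → ℂ) (q : Fin n → Word m) :
    cder k (∑ j, t j • single (q j) 1) = ∑ j, t j • cderW k (q j) := by
  simp only [map_sum, map_smul, cder, lsum_single, LinearMap.toSpanSingleton_apply, one_smul]

theorem mul_sum_Anorm_cder_le {n D : ℕ} {A : ℝ} (hA : 1 ≤ A) (t : Fin n → ℂ)
    (q : Fin n → Word m) (hdeg : ∀ j, (q j).length ≤ D) {tmax : ℝ} (ht : ∀ j, ‖t j‖ ≤ tmax) :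
    A * ∑ k, Anorm A (cder k (∑ j, t j • single (q j) 1)) ≤
      tmax * (∑ j, ((q j).length : ℝ)) * A ^ D := by
  have hA0 : 0 ≤ A := by linarith
  have hω : ∀ w : Word m, 0 ≤ A ^ w.length := fun _ => pow_nonneg hA0 _
  calc A * ∑ k, Anorm A (cder k (∑ j, t j • single (q j) 1))
      ≤ A * ∑ k, ∑ j, ‖t j‖ * Anorm A (cderW k (q j)) := by
        gcongr with k
        rw [cder_sum_smul_single]
        refine (weightedNorm_sum_le hω _ _).trans_eq ?_
        simp only [weightedNorm_smul, Anorm_eq_weightedNorm]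
    _ = ∑ j, ‖t j‖ * (A * ∑ k, Anorm A (cderW k (q j))) := by
        simp only [Finset.mul_sum]
        rw [Finset.sum_comm]
        exact Finset.sum_congr rfl fun j _ => Finset.sum_congr rfl fun k _ => by ring
    _ ≤ ∑ j, tmax * ((q j).length * A ^ D) := by
        refine Finset.sum_le_sum fun j _ => ?_
        refine mul_le_mul (ht j) ((mul_sum_Anorm_cderW_le hA0 (q j)).trans ?_)
          (mul_nonneg hA0 (Finset.sum_nonneg fun k _ => Anorm_nonneg hA0 _))
          ((norm_nonneg _).trans (ht j))
        exact mul_le_mul_of_nonneg_left (pow_le_pow_right₀ hA (hdeg j)) (Nat.cast_nonneg _)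
    _ = tmax * (∑ j, ((q j).length : ℝ)) * A ^ D := by
        rw [← Finset.mul_sum, ← Finset.sum_mul, mul_assoc]

end

/-- for `V = Σ_j t_j q_j` with monomials `q_j` of degree at most `D`
and `B = Σ_j deg q_j` the total number of monomials of the cyclic derivatives
`D_1 V, …, D_m V`, the operator `Ξ₁` satisfies `‖Ξ₁‖_A ≤ |t| B A^{D-2}`; in
particular `‖Ξ₁‖_A ≤ ε` whenever `|t| < ε / (B A^{D-2})`. -/
theorem Xi1_norm_bound (m n D : ℕ) (A : ℝ) (hA : 1 < A)
    (t : Fin n → ℂ) (q : Fin n → Word m) (hdeg : ∀ j, (q j).length ≤ D)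
    (tmax : ℝ) (ht : ∀ j, ‖t j‖ ≤ tmax) :
    (∀ P : NCPoly m, P [] = 0 →
        Anorm A (Xi1 (∑ j, t j • Finsupp.single (q j) 1) P) ≤
          tmax * (∑ j, ((q j).length : ℝ)) * A ^ D / A ^ 2 * Anorm A P)
    ∧ ∀ ε : ℝ, 0 < ε → tmax * (∑ j, ((q j).length : ℝ)) * A ^ D / A ^ 2 < ε →
        ∀ P : NCPoly m, P [] = 0 →
          Anorm A (Xi1 (∑ j, t j • Finsupp.single (q j) 1) P) ≤ ε * Anorm A P := by
  have hA0 : 0 < A := by linarith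
  have bound : ∀ P : NCPoly m, P [] = 0 →
      Anorm A (Xi1 (∑ j, t j • single (q j) 1) P) ≤
        tmax * (∑ j, ((q j).length : ℝ)) * A ^ D / A ^ 2 * Anorm A P := by
    intro P hP
    rw [div_mul_eq_mul_div, le_div_iff₀ (by positivity), mul_comm _ (A ^ 2), mul_comm _ (Anorm A P)]
    exact (sq_mul_Anorm_Xi1_le hA0.le _ hP).trans (mul_le_mul_of_nonneg_left
      (mul_sum_Anorm_cder_le hA.le t q hdeg ht) (Anorm_nonneg hA0.le P))
  refine ⟨bound, fun ε _ hε P hP => (bound P hP).trans ?_⟩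
  exact mul_le_mul_of_nonneg_right hε.le (Anorm_nonneg hA0.le P)
end

section
/- Assume there exist constants A, B > 0 such that ℳ_{k_1,…,k_n}(Q)/Π_i k_i! ≤ A^{Σk_i} B^{deg Q} for all monomials Q. Then by induction on deg P using the decomposition recursion, there exist A', B' > 0 such that ℳ_{k_1,…,k_n}(P,Q)/Π_i k_i! ≤ A'^{Σk_i} B'^{deg P + deg Q} for all monomials P, Q. Consequently, for |t| small enough the generating function ℳ(P,Q) = Σ_{k} Π_i ((-t_i)^{k_i}/k_i!) ℳ_{k}(P,Q) converges absolutely and there exists R < ∞ with |ℳ(P,Q)| ≤ R^{deg P + deg Q}. -/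
/-!
Induction on `∑ kᵢ`, then on `deg P`, with the bound `∏ kᵢ! · A' ^ ∑ kᵢ · γ ^ (deg P + deg Q)`:
each of the three sums of the decomposition recursion is at most a third of it. In the sum
where `P` is cut into two words `R, S`, one factor is a one-point count, and `2B ≤ γ` makes the
sum over the cut point geometric; the binomial coefficients combine with `pᵢ! (kᵢ - pᵢ)!` into
`kᵢ!`, and `2A ≤ A'` makes the sum over `p ≤ k` geometric too. In the sum where `X_k` is glued to
a star `q j`, the factor `kⱼ` is paid for by one power of `A'`, which is large compared with
`n D γ ^ D`. Finally, for `‖tᵢ‖ ≤ 1 / (2A')` the terms of the generating function are dominated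
by `γ ^ (deg P + deg Q) ∏ 2 ^ (-kᵢ)`.
-/

open Finset
open scoped Nat

lemma sum_Iic_half_pow_le_two (k : ℕ) : ∑ x ∈ Iic k, (1 / 2 : ℝ) ^ x ≤ 2 := by
  rw [← Nat.range_succ_eq_Iic]
  exact sum_geometric_two_le _

lemma sum_Iic_half_pow_sub_le_two (k : ℕ) : ∑ x ∈ Iic k, (1 / 2 : ℝ) ^ (k - x) ≤ 2 := by
  have := sum_range_reflect (fun x => (1 / 2 : ℝ) ^ x) (k + 1)
  simp only [Nat.add_sub_cancel] at this
  rw [← Nat.range_succ_eq_Iic, this]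
  exact sum_geometric_two_le _

lemma sum_fin_half_pow_rev_add_half_pow_le_four (L : ℕ) :
    ∑ i : Fin L, ((1 / 2 : ℝ) ^ (L - 1 - i) + (1 / 2) ^ (i : ℕ)) ≤ 4 := by
  rw [Fin.sum_univ_eq_sum_range (fun i => (1 / 2 : ℝ) ^ (L - 1 - i) + (1 / 2) ^ i),
    sum_add_distrib, sum_range_reflect (fun i => (1 / 2 : ℝ) ^ i)]
  linarith [sum_geometric_two_le L]

lemma sum_Iic_prod_eq_prod_sum {ι α R : Type*} [Fintype ι] [DecidableEq ι] [DecidableEq α]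
    [PartialOrder α] [LocallyFiniteOrderBot α] [CommSemiring R] (b : ι → α) (f : ι → α → R) :
    ∑ p ∈ Iic b, ∏ j, f j (p j) = ∏ j, ∑ x ∈ Iic (b j), f j x :=
  (prod_univ_sum _ _).symm

lemma sum_Iic_prod_half_pow_sub_le {ι : Type*} [Fintype ι] [DecidableEq ι] (kk : ι → ℕ) :
    ∑ p ∈ Iic kk, ∏ j, (1 / 2 : ℝ) ^ (kk j - p j) ≤ 2 ^ Fintype.card ι := by
  rw [sum_Iic_prod_eq_prod_sum kk (fun j x => (1 / 2 : ℝ) ^ (kk j - x)), ← card_univ,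
    ← prod_const]
  exact prod_le_prod (fun _ _ => sum_nonneg fun _ _ => by positivity)
    fun j _ => sum_Iic_half_pow_sub_le_two (kk j)

lemma sum_prod_half_pow_le {ι : Type*} [Fintype ι] (u : Finset (ι → ℕ)) :
    ∑ p ∈ u, ∏ j, (1 / 2 : ℝ) ^ p j ≤ 2 ^ Fintype.card ι := by
  classical
  have hu : u ⊆ Iic fun j => u.sup (· j) := fun p hp =>
    mem_Iic.mpr fun j => le_sup (f := (· j)) hp
  calc ∑ p ∈ u, ∏ j, (1 / 2 : ℝ) ^ p j
      ≤ ∑ p ∈ Iic fun j => u.sup (· j), ∏ j, (1 / 2 : ℝ) ^ p j :=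
        sum_le_sum_of_subset_of_nonneg hu fun _ _ _ => by positivity
    _ = ∏ j, ∑ x ∈ Iic (u.sup (· j)), (1 / 2 : ℝ) ^ x :=
        sum_Iic_prod_eq_prod_sum _ fun _ x => (1 / 2 : ℝ) ^ x
    _ ≤ ∏ _j : ι, (2 : ℝ) :=
        prod_le_prod (fun _ _ => sum_nonneg fun _ _ => by positivity)
          fun _ _ => sum_Iic_half_pow_le_two _
    _ = 2 ^ Fintype.card ι := by rw [prod_const, card_univ]

lemma pow_mul_pow_le_of_two_mul_le {a b : ℝ} (hb : 0 ≤ b) (hab : 2 * b ≤ a) (k l : ℕ) :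
    a ^ k * b ^ l ≤ a ^ (k + l) * (1 / 2) ^ l := by
  have ha : 0 ≤ a := by linarith
  calc a ^ k * b ^ l ≤ a ^ k * (a * (1 / 2)) ^ l := by gcongr; linarith
    _ = a ^ (k + l) * (1 / 2) ^ l := by rw [mul_pow, pow_add, mul_assoc]

lemma sum_update_pred_lt {ι : Type*} [Fintype ι] [DecidableEq ι] {kk : ι → ℕ} {j : ι}
    (hj : kk j ≠ 0) : ∑ i, Function.update kk j (kk j - 1) i < ∑ i, kk i := by
  refine sum_lt_sum (fun i _ => ?_) ⟨j, mem_univ j, by simp only [Function.update_self]; omega⟩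
  rcases eq_or_ne i j with rfl | hij
  · simp
  · simp [hij]

def factorialWeight {ι : Type*} [Fintype ι] (A : ℝ) (kk : ι → ℕ) : ℝ :=
  (∏ i, ((kk i)! : ℝ)) * A ^ ∑ i, kk i

section FactorialWeight

variable {ι : Type*} [Fintype ι] {A A' : ℝ} (kk : ι → ℕ)

lemma factorialWeight_nonneg (hA : 0 ≤ A) : 0 ≤ factorialWeight A kk := by
  unfold factorialWeight; positivity

lemma factorialWeight_mono (hA : 0 ≤ A) (hAA' : A ≤ A') :
    factorialWeight A kk ≤ factorialWeight A' kk := by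
  unfold factorialWeight; gcongr

lemma factorialWeight_eq_prod :
    factorialWeight A kk = ∏ i, ((kk i)! : ℝ) * A ^ kk i := by
  rw [factorialWeight, prod_mul_distrib, prod_pow_eq_pow_sum]

lemma natCast_mul_factorialWeight_update_pred [DecidableEq ι] {j : ι} (hj : kk j ≠ 0) :
    (kk j : ℝ) * A * factorialWeight A (Function.update kk j (kk j - 1)) =
      factorialWeight A kk := by
  simp only [factorialWeight_eq_prod, Fintype.prod_eq_mul_prod_compl j, Function.update_self]
  rw [prod_congr rfl fun i hi => by rw [Function.update_of_ne (by simpa using hi)]]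
  obtain ⟨r, hr⟩ := Nat.exists_eq_succ_of_ne_zero hj
  rw [hr, Nat.succ_sub_one, Nat.factorial_succ, pow_succ]
  push_cast
  ring

lemma prod_choose_mul_factorialWeight_le [DecidableEq ι] (hA : 0 ≤ A) (hAA' : 2 * A ≤ A')
    {p : ι → ℕ} (hp : p ≤ kk) :
    (∏ j, ((kk j).choose (p j) : ℝ)) * factorialWeight A' p *
        factorialWeight A (fun j => kk j - p j) ≤
      factorialWeight A' kk * ∏ j, (1 / 2 : ℝ) ^ (kk j - p j) := by
  have hA' : 0 ≤ A' := by linarith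
  simp only [factorialWeight_eq_prod, ← prod_mul_distrib]
  refine prod_le_prod (fun j _ => by positivity) fun j _ => ?_
  have hchoose : ((kk j).choose (p j) : ℝ) * (p j)! * (kk j - p j)! = (kk j)! := by
    exact_mod_cast Nat.choose_mul_factorial_mul_factorial (hp j)
  have hpow := pow_mul_pow_le_of_two_mul_le hA hAA' (p j) (kk j - p j)
  rw [Nat.add_sub_cancel' (hp j)] at hpow
  calc ((kk j).choose (p j) : ℝ) * ((p j)! * A' ^ p j) * ((kk j - p j)! * A ^ (kk j - p j))
      = (kk j)! * (A' ^ p j * A ^ (kk j - p j)) := by rw [← hchoose]; ring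
    _ ≤ (kk j)! * (A' ^ kk j * (1 / 2) ^ (kk j - p j)) := by gcongr
    _ = (kk j)! * A' ^ kk j * (1 / 2) ^ (kk j - p j) := by ring

lemma sum_prod_choose_mul_factorialWeight_le [DecidableEq ι] (hA : 0 ≤ A) (hAA' : 2 * A ≤ A') :
    ∑ p ∈ Iic kk, (∏ j, ((kk j).choose (p j) : ℝ)) * factorialWeight A' p *
        factorialWeight A (fun j => kk j - p j) ≤
      2 ^ Fintype.card ι * factorialWeight A' kk := by
  calc _ ≤ ∑ p ∈ Iic kk, factorialWeight A' kk * ∏ j, (1 / 2 : ℝ) ^ (kk j - p j) :=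
        sum_le_sum fun p hp =>
          prod_choose_mul_factorialWeight_le kk hA hAA' (mem_Iic.mp hp)
    _ ≤ factorialWeight A' kk * 2 ^ Fintype.card ι := by
        rw [← mul_sum]
        exact mul_le_mul_of_nonneg_left (sum_Iic_prod_half_pow_sub_le kk)
          (factorialWeight_nonneg kk (by linarith))
    _ = 2 ^ Fintype.card ι * factorialWeight A' kk := mul_comm _ _

end FactorialWeight

theorem summable_and_norm_tsum_le_of_le_factorialWeight {ι : Type*} [Fintype ι]
    {a : (ι → ℕ) → ℕ} {A c : ℝ} (hA : 0 < A) (ha : ∀ kk, (a kk : ℝ) ≤ factorialWeight A kk * c)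
    {t : ι → ℂ} (ht : ∀ i, ‖t i‖ ≤ (2 * A)⁻¹) :
    Summable (fun kk : ι → ℕ => (∏ i, (-t i) ^ (kk i) / ((kk i)! : ℂ)) * (a kk : ℂ)) ∧
      ‖∑' kk : ι → ℕ, (∏ i, (-t i) ^ (kk i) / ((kk i)! : ℂ)) * (a kk : ℂ)‖ ≤
        2 ^ Fintype.card ι * c := by
  have hc : 0 ≤ c := by
    have := (Nat.cast_nonneg (a 0)).trans (ha 0)
    simpa [factorialWeight] using this
  set g : (ι → ℕ) → ℝ := fun kk => c * ∏ i, (1 / 2 : ℝ) ^ kk i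
  have hg : 0 ≤ g := fun kk => by positivity
  have hsum_g (u : Finset (ι → ℕ)) : ∑ kk ∈ u, g kk ≤ 2 ^ Fintype.card ι * c := by
    rw [← mul_sum, mul_comm]
    exact mul_le_mul_of_nonneg_right (sum_prod_half_pow_le u) hc
  have hterm (kk : ι → ℕ) :
      ‖(∏ i, (-t i) ^ (kk i) / ((kk i)! : ℂ)) * (a kk : ℂ)‖ ≤ g kk := by
    have hti (i : ι) : ‖(-t i) ^ (kk i) / ((kk i)! : ℂ)‖ ≤ (2 * A)⁻¹ ^ kk i / (kk i)! := by
      rw [norm_div, norm_pow, norm_neg, Complex.norm_natCast]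
      gcongr
      exact ht i
    rw [norm_mul, norm_prod, Complex.norm_natCast]
    calc (∏ i, ‖(-t i) ^ (kk i) / ((kk i)! : ℂ)‖) * (a kk : ℝ)
        ≤ (∏ i, (2 * A)⁻¹ ^ kk i / (kk i)!) * (factorialWeight A kk * c) :=
          mul_le_mul (prod_le_prod (fun _ _ => norm_nonneg _) fun i _ => hti i) (ha kk)
            (Nat.cast_nonneg _) (by positivity)
      _ = c * ∏ i, ((2 * A)⁻¹ ^ kk i / (kk i)! * ((kk i)! * A ^ kk i)) := by
          rw [factorialWeight_eq_prod, ← mul_assoc, ← prod_mul_distrib, mul_comm]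
      _ = g kk := by
          have hhalf : (2 * A)⁻¹ * A = 1 / 2 := by field_simp
          refine congrArg (c * ·) (prod_congr rfl fun i _ => ?_)
          rw [← hhalf, mul_pow]
          field_simp
  have hnorm : Summable fun kk : ι → ℕ => ‖(∏ i, (-t i) ^ (kk i) / ((kk i)! : ℂ)) * (a kk : ℂ)‖ :=
    (summable_of_sum_le hg hsum_g).of_nonneg_of_le (fun _ => norm_nonneg _) hterm
  refine ⟨hnorm.of_norm, (norm_tsum_le_tsum_norm hnorm).trans ?_⟩
  exact Real.tsum_le_of_sum_le (fun _ => norm_nonneg _) fun u =>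
    (sum_le_sum fun kk _ => hterm kk).trans (hsum_g u)

section Recursion

variable {m n : ℕ}

/- The three sums of the decomposition recursion for `ℳ_k(X_k P, Q)`: the marked half-edge of
`X_k` is glued to a letter of `P` (cutting `P` into two words), to a letter of a star `q j`, or
to a letter of `Q` (merging the two vertices into one). -/

def splitSum (M1 : (Fin n → ℕ) → Word m → ℕ) (M2 : (Fin n → ℕ) → Word m → Word m → ℕ)
    (kk : Fin n → ℕ) (k : Fin m) (P Q : Word m) : ℕ :=
  ∑ p ∈ Finset.Iic kk, ∑ i : Fin P.length,
    if P.get i = k then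
      (∏ j, Nat.choose (kk j) (p j)) *
        (M2 p (P.take i.1) Q * M1 (fun j => kk j - p j) (P.drop (i.1 + 1)) +
         M2 p (P.drop (i.1 + 1)) Q * M1 (fun j => kk j - p j) (P.take i.1))
    else 0

def starSum (q : Fin n → Word m) (M2 : (Fin n → ℕ) → Word m → Word m → ℕ)
    (kk : Fin n → ℕ) (k : Fin m) (P Q : Word m) : ℕ :=
  ∑ j : Fin n, kk j *
    ∑ i : Fin (q j).length,
      if (q j).get i = k then
        M2 (Function.update kk j (kk j - 1)) ((q j).drop (i.1 + 1) ++ (q j).take i.1 ++ P) Q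
      else 0

def mergeSum (M1 : (Fin n → ℕ) → Word m → ℕ) (kk : Fin n → ℕ) (k : Fin m) (P Q : Word m) : ℕ :=
  ∑ i : Fin Q.length, if Q.get i = k then M1 kk (Q.drop (i.1 + 1) ++ Q.take i.1 ++ P) else 0

variable {M1 : (Fin n → ℕ) → Word m → ℕ} {M2 : (Fin n → ℕ) → Word m → Word m → ℕ}
  {kk : Fin n → ℕ} {k : Fin m} {P Q : Word m} {A B A' γ : ℝ}

lemma cut_contribution_le (hA : 0 ≤ A) (hB : 0 ≤ B) (hA' : 0 ≤ A') (hBγ : 2 * B ≤ γ)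
    (hM1 : ∀ kk Q, (M1 kk Q : ℝ) ≤ factorialWeight A kk * B ^ Q.length)
    {p kk' : Fin n → ℕ} {R S : Word m}
    (hR : (M2 p R Q : ℝ) ≤ factorialWeight A' p * γ ^ (R.length + Q.length))
    (hS : (M2 p S Q : ℝ) ≤ factorialWeight A' p * γ ^ (S.length + Q.length)) :
    (M2 p R Q * M1 kk' S + M2 p S Q * M1 kk' R : ℝ) ≤
      factorialWeight A' p * factorialWeight A kk' *
        (γ ^ (R.length + S.length + Q.length) * ((1 / 2) ^ S.length + (1 / 2) ^ R.length)) := by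
  have hW' := factorialWeight_nonneg p hA'
  have hW := factorialWeight_nonneg kk' hA
  have hγ : 0 ≤ γ := by linarith
  have h1R := hM1 kk' R
  have h1S := hM1 kk' S
  have hpowR := pow_mul_pow_le_of_two_mul_le hB hBγ (R.length + Q.length) S.length
  have hpowS := pow_mul_pow_le_of_two_mul_le hB hBγ (S.length + Q.length) R.length
  rw [show R.length + Q.length + S.length = R.length + S.length + Q.length by omega] at hpowR
  rw [show S.length + Q.length + R.length = R.length + S.length + Q.length by omega] at hpowS
  calc _ ≤ factorialWeight A' p * γ ^ (R.length + Q.length) *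
          (factorialWeight A kk' * B ^ S.length) +
        factorialWeight A' p * γ ^ (S.length + Q.length) *
          (factorialWeight A kk' * B ^ R.length) := by
        gcongr
    _ = factorialWeight A' p * factorialWeight A kk' * (γ ^ (R.length + Q.length) * B ^ S.length +
          γ ^ (S.length + Q.length) * B ^ R.length) := by ring
    _ ≤ _ := mul_le_mul_of_nonneg_left (by linarith) (mul_nonneg hW' hW)

lemma splitSum_le (hA : 0 ≤ A) (hB : 0 ≤ B) (hAA' : 2 * A ≤ A') (hBγ : 2 * B ≤ γ)
    (hγ : 3 * 2 ^ (n + 2) ≤ γ)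
    (hM1 : ∀ kk Q, (M1 kk Q : ℝ) ≤ factorialWeight A kk * B ^ Q.length)
    (ih : ∀ p ≤ kk, ∀ P' : Word m, P'.length < P.length + 1 →
      (M2 p P' Q : ℝ) ≤ factorialWeight A' p * γ ^ (P'.length + Q.length)) :
    (splitSum M1 M2 kk k P Q : ℝ) ≤ factorialWeight A' kk * γ ^ (P.length + 1 + Q.length) / 3 := by
  have hγ1 : 1 ≤ γ := by linarith [one_le_pow₀ (M₀ := ℝ) one_le_two (n := n + 2)]
  have hA' : 0 ≤ A' := by linarith
  have hW := factorialWeight_nonneg kk hA'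
  set L := P.length
  set c : (Fin n → ℕ) → ℝ := fun p => (∏ j, ((kk j).choose (p j) : ℝ)) *
    factorialWeight A' p * factorialWeight A (fun j => kk j - p j)
  set s : ℕ → ℝ := fun i => γ ^ (L - 1 + Q.length) * ((1 / 2) ^ (L - 1 - i) + (1 / 2) ^ i)
  unfold splitSum
  push_cast
  calc _ ≤ ∑ p ∈ Iic kk, ∑ i : Fin L, c p * s i := by
        gcongr with p hp i
        have := factorialWeight_nonneg p hA'
        have := factorialWeight_nonneg (fun j => kk j - p j) hA
        split_ifs
        swap
        · positivity
        have hi := i.isLt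
        have hR : (P.take i).length = i := by rw [List.length_take]; omega
        have hS : (P.drop (i + 1)).length = L - 1 - i := by rw [List.length_drop]; omega
        have hcut := cut_contribution_le (kk' := fun j => kk j - p j) hA hB hA' hBγ hM1
          (ih p (mem_Iic.mp hp) (P.take i) (by omega))
          (ih p (mem_Iic.mp hp) (P.drop (i + 1)) (by omega))
        rw [hR, hS, show i + (L - 1 - i) = L - 1 by omega] at hcut
        refine (mul_le_mul_of_nonneg_left hcut (by positivity)).trans_eq ?_
        dsimp only [c, s]
        ring
    _ = (∑ p ∈ Iic kk, c p) * ∑ i : Fin L, s i := by rw [sum_mul_sum]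
    _ ≤ (2 ^ n * factorialWeight A' kk) * (γ ^ (L - 1 + Q.length) * 4) := by
        have hsum_c := sum_prod_choose_mul_factorialWeight_le kk hA hAA'
        rw [Fintype.card_fin] at hsum_c
        have hsum_s : ∑ i : Fin L, s i ≤ γ ^ (L - 1 + Q.length) * 4 := by
          rw [← mul_sum]
          gcongr
          exact sum_fin_half_pow_rev_add_half_pow_le_four L
        exact mul_le_mul hsum_c hsum_s (sum_nonneg fun i _ => by positivity) (by positivity)
    _ = factorialWeight A' kk * (3 * 2 ^ (n + 2)) * γ ^ (L - 1 + Q.length) / 3 := by ring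
    _ ≤ factorialWeight A' kk * γ * γ ^ (L - 1 + Q.length) / 3 := by gcongr
    _ ≤ factorialWeight A' kk * γ ^ (L + 1 + Q.length) / 3 := by
        rw [mul_assoc, ← pow_succ']
        gcongr factorialWeight A' kk * ?_ / 3
        exact pow_le_pow_right₀ hγ1 (by omega)

lemma mul_starSum_summand_le {q : Fin n → Word m} {D : ℕ} (hq : ∀ j, (q j).length ≤ D)
    (hA' : 0 < A') (hγ : 1 ≤ γ)
    (ih : ∀ p : Fin n → ℕ, ∑ i, p i < ∑ i, kk i → ∀ P' : Word m,
      (M2 p P' Q : ℝ) ≤ factorialWeight A' p * γ ^ (P'.length + Q.length)) (j : Fin n) :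
    A' * (kk j * ∑ i : Fin (q j).length, if (q j).get i = k then
      (M2 (Function.update kk j (kk j - 1)) ((q j).drop (i + 1) ++ (q j).take i ++ P) Q : ℝ)
      else 0) ≤ D * γ ^ D * (factorialWeight A' kk * γ ^ (P.length + Q.length)) := by
  have hW := factorialWeight_nonneg kk hA'.le
  by_cases hkj : kk j = 0
  · simp only [hkj, Nat.cast_zero, zero_mul, mul_zero]
    positivity
  set kk' := Function.update kk j (kk j - 1)
  have hW' := factorialWeight_nonneg kk' hA'.le
  have hterm (i : Fin (q j).length) : (if (q j).get i = k then
      (M2 kk' ((q j).drop (i + 1) ++ (q j).take i ++ P) Q : ℝ) else 0) ≤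
        factorialWeight A' kk' * γ ^ (D + (P.length + Q.length)) := by
    split_ifs
    · have hlen : ((q j).drop (i + 1) ++ (q j).take i ++ P).length + Q.length ≤
          D + (P.length + Q.length) := by
        have := hq j
        simp only [List.length_append, List.length_drop, List.length_take]
        omega
      exact (ih kk' (sum_update_pred_lt hkj) _).trans
        (mul_le_mul_of_nonneg_left (pow_le_pow_right₀ hγ hlen) hW')
    · positivity
  calc _ ≤ A' * (kk j * ∑ _i : Fin (q j).length,
          factorialWeight A' kk' * γ ^ (D + (P.length + Q.length))) := by
        gcongr with i
        exact hterm i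
    _ = (q j).length * γ ^ D * ((kk j * A' * factorialWeight A' kk') *
          γ ^ (P.length + Q.length)) := by
        rw [sum_const, card_univ, Fintype.card_fin, nsmul_eq_mul, pow_add]
        ring
    _ ≤ D * γ ^ D * (factorialWeight A' kk * γ ^ (P.length + Q.length)) := by
        rw [natCast_mul_factorialWeight_update_pred kk hkj]
        gcongr
        exact_mod_cast hq j

lemma starSum_le {q : Fin n → Word m} {D : ℕ} (hq : ∀ j, (q j).length ≤ D) (hA' : 0 < A')
    (hγ : 1 ≤ γ) (hA'D : 3 * n * D * γ ^ D ≤ A')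
    (ih : ∀ p : Fin n → ℕ, ∑ i, p i < ∑ i, kk i → ∀ P' : Word m,
      (M2 p P' Q : ℝ) ≤ factorialWeight A' p * γ ^ (P'.length + Q.length)) :
    (starSum q M2 kk k P Q : ℝ) ≤ factorialWeight A' kk * γ ^ (P.length + 1 + Q.length) / 3 := by
  set X := factorialWeight A' kk * γ ^ (P.length + Q.length)
  have hW := factorialWeight_nonneg kk hA'.le
  have hX : 0 ≤ X := by positivity
  have hA'star : A' * starSum q M2 kk k P Q ≤ A' * (X / 3) := by
    unfold starSum
    push_cast
    rw [mul_sum]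
    calc _ ≤ ∑ _j : Fin n, D * γ ^ D * X :=
          sum_le_sum fun j _ => mul_starSum_summand_le hq hA' hγ ih j
      _ = 3 * n * D * γ ^ D * X / 3 := by
          rw [sum_const, card_univ, Fintype.card_fin, nsmul_eq_mul]
          ring
      _ ≤ A' * (X / 3) := by
          rw [mul_div_assoc]
          gcongr
  calc (starSum q M2 kk k P Q : ℝ) ≤ X / 3 := le_of_mul_le_mul_left hA'star hA'
    _ ≤ factorialWeight A' kk * γ ^ (P.length + 1 + Q.length) / 3 := by
        gcongr factorialWeight A' kk * ?_ / 3
        exact pow_le_pow_right₀ hγ (by omega)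

lemma mergeSum_le (hA : 0 ≤ A) (hAA' : A ≤ A') (hB : 0 ≤ B) (hBγ : 2 * B ≤ γ) (hγ : 6 ≤ γ)
    (hM1 : ∀ kk Q, (M1 kk Q : ℝ) ≤ factorialWeight A kk * B ^ Q.length) :
    (mergeSum M1 kk k P Q : ℝ) ≤ factorialWeight A' kk * γ ^ (P.length + 1 + Q.length) / 3 := by
  set b := Q.length + P.length - 1
  have hW := factorialWeight_nonneg kk hA
  have hW' := factorialWeight_nonneg kk (hA.trans hAA')
  have hterm (i : Fin Q.length) : (if Q.get i = k then
      (M1 kk (Q.drop (i + 1) ++ Q.take i ++ P) : ℝ) else 0) ≤ factorialWeight A kk * B ^ b := by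
    split_ifs
    · convert hM1 kk _ using 3
      simp only [List.length_append, List.length_drop, List.length_take]
      omega
    · positivity
  have hQ : (Q.length : ℝ) * B ^ b ≤ γ ^ (b + 1) / 3 := by
    have hQb : (Q.length : ℝ) ≤ 2 ^ (b + 1) := by
      exact_mod_cast (Nat.lt_two_pow_self).le.trans (Nat.pow_le_pow_right two_pos (by omega))
    calc (Q.length : ℝ) * B ^ b ≤ 2 ^ (b + 1) * B ^ b := by gcongr
      _ = 2 * (2 * B) ^ b := by ring
      _ ≤ 2 * γ ^ b := by gcongr
      _ ≤ γ / 3 * γ ^ b := by gcongr; linarith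
      _ = γ ^ (b + 1) / 3 := by ring
  unfold mergeSum
  push_cast
  calc _ ≤ ∑ _i : Fin Q.length, factorialWeight A kk * B ^ b := sum_le_sum fun i _ => hterm i
    _ = factorialWeight A kk * (Q.length * B ^ b) := by
        rw [sum_const, card_univ, Fintype.card_fin, nsmul_eq_mul]
        ring
    _ ≤ factorialWeight A' kk * (γ ^ (b + 1) / 3) :=
        mul_le_mul (factorialWeight_mono kk hA hAA') hQ (by positivity) hW'
    _ ≤ factorialWeight A' kk * γ ^ (P.length + 1 + Q.length) / 3 := by
        rw [← mul_div_assoc]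
        gcongr factorialWeight A' kk * ?_ / 3
        exact pow_le_pow_right₀ (by linarith) (by omega)

end Recursion

theorem twoPoint_le_factorialWeight_mul_pow {m n D : ℕ} {q : Fin n → Word m}
    (hq : ∀ j, (q j).length ≤ D)
    {M1 : (Fin n → ℕ) → Word m → ℕ} {M2 : (Fin n → ℕ) → Word m → Word m → ℕ}
    (hrec : ∀ kk k P Q, M2 kk (k :: P) Q =
      splitSum M1 M2 kk k P Q + starSum q M2 kk k P Q + mergeSum M1 kk k P Q)
    (hP1Q : ∀ kk Q, M2 kk [] Q = 0) {A B A' γ : ℝ} (hA : 0 < A) (hB : 0 ≤ B)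
    (hM1 : ∀ kk Q, (M1 kk Q : ℝ) ≤ factorialWeight A kk * B ^ Q.length)
    (hAA' : 2 * A ≤ A') (hA'D : 3 * n * D * γ ^ D ≤ A') (hBγ : 2 * B ≤ γ)
    (hγ : 3 * 2 ^ (n + 2) ≤ γ) (kk : Fin n → ℕ) (P Q : Word m) :
    (M2 kk P Q : ℝ) ≤ factorialWeight A' kk * γ ^ (P.length + Q.length) := by
  have h12 : (12 : ℝ) ≤ 3 * 2 ^ (n + 2) := by
    rw [pow_add]
    nlinarith [one_le_pow₀ (M₀ := ℝ) one_le_two (n := n)]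
  have hA' : 0 < A' := by linarith
  induction hN : ∑ i, kk i using Nat.strong_induction_on generalizing kk P Q with
  | _ N ihN =>
  induction hL : P.length using Nat.strong_induction_on generalizing kk P Q with
  | _ L ihL =>
  cases P with
  | nil =>
    rw [hP1Q, Nat.cast_zero]
    exact mul_nonneg (factorialWeight_nonneg kk hA'.le) (pow_nonneg (by linarith) _)
  | cons c T =>
    have ih_split : ∀ p ≤ kk, ∀ P' : Word m, P'.length < T.length + 1 →
        (M2 p P' Q : ℝ) ≤ factorialWeight A' p * γ ^ (P'.length + Q.length) := by
      intro p hp P' hP'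
      rcases (sum_le_sum fun i (_ : i ∈ univ) => hp i).lt_or_eq with hlt | heq
      · exact ihN _ (hN ▸ hlt) p P' Q rfl
      · exact ihL _ (by simp only [List.length_cons] at hL; omega) p P' Q (heq.trans hN) rfl
    have ih_star : ∀ p : Fin n → ℕ, ∑ i, p i < ∑ i, kk i → ∀ P' : Word m,
        (M2 p P' Q : ℝ) ≤ factorialWeight A' p * γ ^ (P'.length + Q.length) :=
      fun p hp P' => ihN _ (hN ▸ hp) p P' Q rfl
    rw [hrec, Nat.cast_add, Nat.cast_add, ← hL, List.length_cons]
    have hsplit := splitSum_le (k := c) hA.le hB hAA' hBγ hγ hM1 ih_split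
    have hstar := starSum_le (k := c) (P := T) hq hA' (by linarith) hA'D ih_star
    have hmerge := mergeSum_le (kk := kk) (k := c) (P := T) (Q := Q) (A' := A')
      hA.le (by linarith) hB hBγ (by linarith) hM1
    linarith

theorem two_point_generating_function_bound_general (m n D : ℕ)
    (q : Fin n → Word m) (hq : ∀ j, (q j).length ≤ D)
    (M1 : (Fin n → ℕ) → Word m → ℕ) (M2 : (Fin n → ℕ) → Word m → Word m → ℕ)
    (hrec : ∀ (kk : Fin n → ℕ) (k : Fin m) (P Q : Word m),
      M2 kk (k :: P) Q =
        (∑ p ∈ Finset.Iic kk, ∑ i : Fin P.length,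
          if P.get i = k then
            (∏ j, Nat.choose (kk j) (p j)) *
              (M2 p (P.take i.1) Q * M1 (fun j => kk j - p j) (P.drop (i.1 + 1)) +
               M2 p (P.drop (i.1 + 1)) Q * M1 (fun j => kk j - p j) (P.take i.1))
          else 0)
        + (∑ j : Fin n, kk j *
            ∑ i : Fin (q j).length,
              if (q j).get i = k then
                M2 (Function.update kk j (kk j - 1))
                  ((q j).drop (i.1 + 1) ++ (q j).take i.1 ++ P) Q
              else 0)
        + (∑ i : Fin Q.length,
            if Q.get i = k then M1 kk (Q.drop (i.1 + 1) ++ Q.take i.1 ++ P) else 0))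
    (hP1Q : ∀ kk Q, M2 kk [] Q = 0)
    (A B : ℝ) (hA : 0 < A) (hB : 0 < B)
    (hM1 : ∀ (kk : Fin n → ℕ) (Q : Word m),
      (M1 kk Q : ℝ) ≤ (∏ i, (Nat.factorial (kk i) : ℝ)) * A ^ (∑ i, kk i) * B ^ Q.length) :
    (∃ A' B' : ℝ, 0 < A' ∧ 0 < B' ∧ ∀ (kk : Fin n → ℕ) (P Q : Word m),
        (M2 kk P Q : ℝ) ≤
          (∏ i, (Nat.factorial (kk i) : ℝ)) * A' ^ (∑ i, kk i) * B' ^ (P.length + Q.length))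
    ∧ ∃ η R : ℝ, 0 < η ∧ 0 < R ∧ ∀ t : Fin n → ℂ, (∀ i, ‖t i‖ ≤ η) →
        ∀ P Q : Word m,
          Summable (fun kk : Fin n → ℕ =>
            (∏ i, (-t i) ^ (kk i) / (Nat.factorial (kk i) : ℂ)) * (M2 kk P Q : ℂ)) ∧
          ‖(∑' kk : Fin n → ℕ,
              (∏ i, (-t i) ^ (kk i) / (Nat.factorial (kk i) : ℂ)) * (M2 kk P Q : ℂ))‖ ≤
            R ^ (P.length + Q.length) := by
  set γ : ℝ := 2 * B + 3 * 2 ^ (n + 2)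
  set A' : ℝ := 2 * A + 3 * n * D * γ ^ D
  have hγ : 0 < γ := by positivity
  have hA' : 0 < A' := by positivity
  have hbound := twoPoint_le_factorialWeight_mul_pow hq hrec hP1Q hA hB.le hM1
    (le_add_of_nonneg_right (by positivity)) (le_add_of_nonneg_left (by positivity))
    (le_add_of_nonneg_right (by positivity)) (le_add_of_nonneg_left (by positivity))
  refine ⟨⟨A', γ, hA', hγ, hbound⟩, (2 * A')⁻¹, 2 ^ n * γ, by positivity, by positivity,
    fun t ht P Q => ?_⟩
  cases P with
  | nil =>
    simp only [hP1Q, Nat.cast_zero, mul_zero, tsum_zero, norm_zero]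
    exact ⟨summable_zero, by positivity⟩
  | cons c T =>
    obtain ⟨hsum, hnorm⟩ :=
      summable_and_norm_tsum_le_of_le_factorialWeight hA' (fun kk => hbound kk (c :: T) Q) ht
    refine ⟨hsum, hnorm.trans ?_⟩
    rw [Fintype.card_fin, mul_pow]
    gcongr
    exact le_self_pow₀ (one_le_pow₀ one_le_two) (by simp)

/-- if the planar two-point map counts `M2` satisfy the decomposition
recursion (with one-point counts `M1` counting planar maps with `kk i` stars of
type `q i` of degree `≤ D` and one star of type `P`), the convention
`ℳ_k(P,1) = 0 = ℳ_k(1,Q)`, and `M1` satisfies a bound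
`M1_k(Q) ≤ Πk_i! · A^{Σk_i} B^{deg Q}`, then `M2` satisfies a bound of the same
form, and for `|t|` small enough the generating function
`ℳ(P,Q) = Σ_k Π((-t_i)^{k_i}/k_i!) ℳ_k(P,Q)` converges absolutely with
`|ℳ(P,Q)| ≤ R^{deg P + deg Q}` for some finite `R`. -/
theorem two_point_generating_function_bound (m n D : ℕ)
    (q : Fin n → Word m) (hq : ∀ j, (q j).length ≤ D)
    (M1 : (Fin n → ℕ) → Word m → ℕ) (M2 : (Fin n → ℕ) → Word m → Word m → ℕ)
    (hrec : ∀ (kk : Fin n → ℕ) (k : Fin m) (P Q : Word m),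
      M2 kk (k :: P) Q =
        (∑ p ∈ Finset.Iic kk, ∑ i : Fin P.length,
          if P.get i = k then
            (∏ j, Nat.choose (kk j) (p j)) *
              (M2 p (P.take i.1) Q * M1 (fun j => kk j - p j) (P.drop (i.1 + 1)) +
               M2 p (P.drop (i.1 + 1)) Q * M1 (fun j => kk j - p j) (P.take i.1))
          else 0)
        + (∑ j : Fin n, kk j *
            ∑ i : Fin (q j).length,
              if (q j).get i = k then
                M2 (Function.update kk j (kk j - 1))
                  ((q j).drop (i.1 + 1) ++ (q j).take i.1 ++ P) Q
              else 0)
        + (∑ i : Fin Q.length,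
            if Q.get i = k then M1 kk (Q.drop (i.1 + 1) ++ Q.take i.1 ++ P) else 0))
    (hPQ1 : ∀ kk P, M2 kk P [] = 0)
    (hP1Q : ∀ kk Q, M2 kk [] Q = 0)
    (A B : ℝ) (hA : 0 < A) (hB : 0 < B)
    (hM1 : ∀ (kk : Fin n → ℕ) (Q : Word m),
      (M1 kk Q : ℝ) ≤ (∏ i, (Nat.factorial (kk i) : ℝ)) * A ^ (∑ i, kk i) * B ^ Q.length) :
    (∃ A' B' : ℝ, 0 < A' ∧ 0 < B' ∧ ∀ (kk : Fin n → ℕ) (P Q : Word m),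
        (M2 kk P Q : ℝ) ≤
          (∏ i, (Nat.factorial (kk i) : ℝ)) * A' ^ (∑ i, kk i) * B' ^ (P.length + Q.length))
    ∧ ∃ η R : ℝ, 0 < η ∧ 0 < R ∧ ∀ t : Fin n → ℂ, (∀ i, ‖t i‖ ≤ η) →
        ∀ P Q : Word m,
          Summable (fun kk : Fin n → ℕ =>
            (∏ i, (-t i) ^ (kk i) / (Nat.factorial (kk i) : ℂ)) * (M2 kk P Q : ℂ)) ∧
          ‖(∑' kk : Fin n → ℕ,
              (∏ i, (-t i) ^ (kk i) / (Nat.factorial (kk i) : ℂ)) * (M2 kk P Q : ℂ))‖ ≤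
            R ^ (P.length + Q.length) :=
  two_point_generating_function_bound_general m n D q hq M1 M2 hrec hP1Q A B hA hB hM1
end
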